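/- arXiv:2405.07650 — 5 statements merged into one kernel-verified Lean document; each statement's English description precedes it below -/
import Mathlib

section
/- The linear map L : u ↦ ∫₀^T e^{tA} H u_t dt, defined on continuous inputs u : [0,T] → ℝ^m, is surjective onto ℝ^d if and only if for every ξ ∈ ℝ^d, (Hᵀ e^{tAᵀ} ξ = 0 for all t ∈ [0,T]) implies ξ = 0. Equivalently: the state-output system dx_t/dt = Aᵀ x_t, z_t = Hᵀ x_t is observable (distinct initial conditions produce distinct output trajectories on [0,T]) if and only if the backward-in-time dual control system −dy_t/dt = A y_t + H u_t, y_T = 0 is controllable (every η ∈ ℝ^d is reachable as y_0 for some continuous input u). -/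
open Matrix intervalIntegral

section Aux

open MeasureTheory

private lemma exp_smul_continuous {d : ℕ} (A : Matrix (Fin d) (Fin d) ℝ) :
    Continuous fun t : ℝ => NormedSpace.exp (t • A) := by
  letI : NormedRing (Matrix (Fin d) (Fin d) ℝ) := Matrix.linftyOpNormedRing
  letI : NormedAlgebra ℝ (Matrix (Fin d) (Fin d) ℝ) := Matrix.linftyOpNormedAlgebra
  letI : NormedAlgebra ℚ (Matrix (Fin d) (Fin d) ℝ) := NormedAlgebra.restrictScalars ℚ ℝ _
  exact NormedSpace.exp_continuous.comp (continuous_id.smul continuous_const)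

private lemma componentIntegrable {d : ℕ} {a b : ℝ} {f : ℝ → Fin d → ℝ}
    (hf : IntervalIntegrable f volume a b) (i : Fin d) :
    IntervalIntegrable (fun t => f t i) volume a b :=
  ⟨(ContinuousLinearMap.proj (R := ℝ) (φ := fun _ : Fin d => ℝ) i).integrable_comp hf.1,
   (ContinuousLinearMap.proj (R := ℝ) (φ := fun _ : Fin d => ℝ) i).integrable_comp hf.2⟩

private lemma integral_component {d : ℕ} {a b : ℝ} {f : ℝ → Fin d → ℝ}
    (hf : IntervalIntegrable f volume a b) (i : Fin d) :
    (∫ t in a..b, f t) i = ∫ t in a..b, f t i :=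
  ((ContinuousLinearMap.proj (R := ℝ) (φ := fun _ : Fin d => ℝ) i).intervalIntegral_comp_comm
    hf).symm

private lemma dot_integral {d : ℕ} {a b : ℝ} {f : ℝ → Fin d → ℝ}
    (hf : IntervalIntegrable f volume a b) (ξ : Fin d → ℝ) :
    ξ ⬝ᵥ (∫ t in a..b, f t) = ∫ t in a..b, ξ ⬝ᵥ f t := by
  simp only [dotProduct]
  rw [intervalIntegral.integral_finset_sum
    (fun i _ => (componentIntegrable hf i).const_mul (ξ i))]
  exact Finset.sum_congr rfl fun i _ => by
    rw [integral_component hf i, intervalIntegral.integral_const_mul]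

end Aux

/-- The linear map `L : u ↦ ∫₀ᵀ e^{tA} H u_t dt` on continuous inputs is
surjective onto `ℝ^d` (controllability of the backward-in-time dual control system)
if and only if `Hᵀ e^{tAᵀ} ξ = 0` for all `t ∈ [0,T]` implies `ξ = 0`
(observability of the state-output system). -/
theorem controllable_iff_observable
    (d m : ℕ) (hd : 0 < d) (hm : 0 < m) (T : ℝ) (hT : 0 < T)
    (A : Matrix (Fin d) (Fin d) ℝ) (H : Matrix (Fin d) (Fin m) ℝ) :
    (∀ η : Fin d → ℝ, ∃ u : ℝ → Fin m → ℝ, ContinuousOn u (Set.Icc 0 T) ∧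
        (∫ t in (0:ℝ)..T, (NormedSpace.exp (t • A)).mulVec (H.mulVec (u t))) = η) ↔
      (∀ ξ : Fin d → ℝ,
        (∀ t ∈ Set.Icc (0:ℝ) T, (Hᵀ * NormedSpace.exp (t • Aᵀ)).mulVec ξ = 0) → ξ = 0) := by
  have hFc : Continuous fun t : ℝ => NormedSpace.exp (t • A) := exp_smul_continuous A
  have hU : Set.uIcc (0:ℝ) T = Set.Icc 0 T := Set.uIcc_of_le hT.le
  have hexpT : ∀ t : ℝ, NormedSpace.exp (t • Aᵀ) = (NormedSpace.exp (t • A))ᵀ := by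
    intro t; rw [← Matrix.transpose_smul, Matrix.exp_transpose]
  have hdual : ∀ (t : ℝ) (ξ : Fin d → ℝ),
      (Hᵀ * NormedSpace.exp (t • Aᵀ)) *ᵥ ξ
        = Hᵀ *ᵥ ((NormedSpace.exp (t • A))ᵀ *ᵥ ξ) := by
    intro t ξ; rw [hexpT, Matrix.mulVec_mulVec]
  constructor
  · -- controllable → observable
    intro hsurj ξ hξ
    obtain ⟨u, hu, huI⟩ := hsurj ξ
    set f : ℝ → Fin d → ℝ := fun t => (NormedSpace.exp (t • A)) *ᵥ (H *ᵥ u t) with hf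
    have hfc : ContinuousOn f (Set.uIcc 0 T) := by
      rw [hU]
      apply continuousOn_pi.2
      intro i
      simp only [hf, Matrix.mulVec, dotProduct]
      refine continuousOn_finset_sum _ fun j _ => ContinuousOn.mul ?_ ?_
      · exact ((continuous_apply j).comp ((continuous_apply i).comp hFc)).continuousOn
      · exact continuousOn_finset_sum _ fun k _ =>
          continuousOn_const.mul ((continuous_apply k).comp_continuousOn hu)
    have hfi : IntervalIntegrable f MeasureTheory.volume 0 T := hfc.intervalIntegrable
    have hdot : ∀ t ∈ Set.uIcc (0:ℝ) T, ξ ⬝ᵥ f t = 0 := by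
      intro t ht
      rw [hU] at ht
      have h0 := hξ t ht
      calc ξ ⬝ᵥ f t
          = ((NormedSpace.exp (t • A))ᵀ *ᵥ ξ) ⬝ᵥ (H *ᵥ u t) := by
            rw [hf, Matrix.dotProduct_mulVec, Matrix.mulVec_transpose]
        _ = (Hᵀ *ᵥ ((NormedSpace.exp (t • A))ᵀ *ᵥ ξ)) ⬝ᵥ u t := by
            rw [Matrix.dotProduct_mulVec, Matrix.mulVec_transpose H]
        _ = 0 := by rw [← hdual t ξ, h0, zero_dotProduct]
    have hz : ξ ⬝ᵥ ξ = 0 := by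
      calc ξ ⬝ᵥ ξ = ξ ⬝ᵥ (∫ t in (0:ℝ)..T, f t) := by rw [huI]
        _ = ∫ t in (0:ℝ)..T, ξ ⬝ᵥ f t := dot_integral hfi ξ
        _ = ∫ _t in (0:ℝ)..T, (0:ℝ) := intervalIntegral.integral_congr hdot
        _ = 0 := by simp
    exact dotProduct_self_eq_zero.mp hz
  · -- observable → controllable
    intro hobs η
    set G : ℝ → Matrix (Fin d) (Fin d) ℝ := fun t =>
      NormedSpace.exp (t • A) * (H * Hᵀ) * (NormedSpace.exp (t • A))ᵀ with hG
    have hGC : Continuous G :=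
      (hFc.matrix_mul continuous_const).matrix_mul hFc.matrix_transpose
    set W : Matrix (Fin d) (Fin d) ℝ :=
      Matrix.of fun i j => ∫ t in (0:ℝ)..T, G t i j with hW
    have hGv : ∀ ξ : Fin d → ℝ,
        IntervalIntegrable (fun t => G t *ᵥ ξ) MeasureTheory.volume 0 T :=
      fun ξ => (hGC.matrix_mulVec continuous_const).intervalIntegrable 0 T
    have hWv : ∀ ξ : Fin d → ℝ, W *ᵥ ξ = ∫ t in (0:ℝ)..T, G t *ᵥ ξ := by
      intro ξ
      funext i
      rw [integral_component (hGv ξ) i]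
      simp only [hW, Matrix.mulVec, dotProduct, Matrix.of_apply]
      have hcij : ∀ j, Continuous fun t => G t i j := fun j =>
        (continuous_apply j).comp ((continuous_apply i).comp hGC)
      rw [intervalIntegral.integral_finset_sum
        (f := fun j (t : ℝ) => G t i j * ξ j)
        (fun j _ => ((hcij j).mul continuous_const).intervalIntegrable 0 T)]
      exact Finset.sum_congr rfl fun j _ => (intervalIntegral.integral_mul_const _ _).symm
    -- the quadratic form of `W` is an integral of squares
    have hquad : ∀ (ξ : Fin d → ℝ) (t : ℝ),
        ξ ⬝ᵥ (G t *ᵥ ξ)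
          = (Hᵀ *ᵥ ((NormedSpace.exp (t • A))ᵀ *ᵥ ξ)) ⬝ᵥ
            (Hᵀ *ᵥ ((NormedSpace.exp (t • A))ᵀ *ᵥ ξ)) := by
      intro ξ t
      have h1 : G t *ᵥ ξ
          = NormedSpace.exp (t • A) *ᵥ
            (H *ᵥ (Hᵀ *ᵥ ((NormedSpace.exp (t • A))ᵀ *ᵥ ξ))) := by
        simp only [hG, Matrix.mulVec_mulVec, Matrix.mul_assoc]
      rw [h1, Matrix.dotProduct_mulVec, ← Matrix.mulVec_transpose,
        Matrix.dotProduct_mulVec, ← Matrix.mulVec_transpose]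
    -- injectivity of W
    have hker : ∀ ξ : Fin d → ℝ, W *ᵥ ξ = 0 → ξ = 0 := by
      intro ξ h0
      have hzero : (0:ℝ) = ∫ t in (0:ℝ)..T, ξ ⬝ᵥ (G t *ᵥ ξ) := by
        rw [← dot_integral (hGv ξ) ξ, ← hWv ξ, h0, dotProduct_zero]
      set q : ℝ → ℝ := fun t => ξ ⬝ᵥ (G t *ᵥ ξ) with hq
      have hqc : Continuous q := by
        have : Continuous fun t => G t *ᵥ ξ := hGC.matrix_mulVec continuous_const
        exact (continuous_const.dotProduct this)
      have hqnonneg : ∀ t, 0 ≤ q t := by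
        intro t
        rw [hq]
        simp only
        rw [hquad ξ t]
        exact Finset.sum_nonneg fun i _ => mul_self_nonneg _
      have hq0 : q =ᵐ[MeasureTheory.volume.restrict (Set.Ioc 0 T)] 0 :=
        (intervalIntegral.integral_eq_zero_iff_of_le_of_nonneg_ae hT.le
          (Filter.Eventually.of_forall fun t => hqnonneg t)
          (hqc.intervalIntegrable 0 T)).mp hzero.symm
      have hq0' : q =ᵐ[MeasureTheory.volume.restrict (Set.Icc 0 T)] 0 := by
        rwa [MeasureTheory.restrict_Ioc_eq_restrict_Icc] at hq0
      have hEq : Set.EqOn q 0 (Set.Icc 0 T) :=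
        MeasureTheory.Measure.eqOn_Icc_of_ae_eq MeasureTheory.volume hT.ne hq0'
          hqc.continuousOn continuousOn_const
      apply hobs ξ
      intro t ht
      have hqt : q t = 0 := hEq ht
      rw [hq] at hqt
      simp only at hqt
      rw [hquad ξ t] at hqt
      have := dotProduct_self_eq_zero.mp hqt
      rw [hdual t ξ, this]
    have hinj : Function.Injective (Matrix.mulVecLin W) := by
      rw [← LinearMap.ker_eq_bot]
      rw [LinearMap.ker_eq_bot']
      intro ξ hξ
      exact hker ξ hξ
    have hsurj : Function.Surjective (Matrix.mulVecLin W) :=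
      LinearMap.injective_iff_surjective.mp hinj
    obtain ⟨ξ, hξ⟩ := hsurj η
    refine ⟨fun t => Hᵀ *ᵥ ((NormedSpace.exp (t • A))ᵀ *ᵥ ξ), ?_, ?_⟩
    · exact (continuous_const.matrix_mulVec
        (hFc.matrix_transpose.matrix_mulVec continuous_const)).continuousOn
    · have hint : ∀ t : ℝ,
          (NormedSpace.exp (t • A)) *ᵥ
            (H *ᵥ (Hᵀ *ᵥ ((NormedSpace.exp (t • A))ᵀ *ᵥ ξ))) = G t *ᵥ ξ := by
        intro t
        simp only [hG, Matrix.mulVec_mulVec, Matrix.mul_assoc]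
      calc (∫ t in (0:ℝ)..T, (NormedSpace.exp (t • A)) *ᵥ
              (H *ᵥ (Hᵀ *ᵥ ((NormedSpace.exp (t • A))ᵀ *ᵥ ξ))))
          = ∫ t in (0:ℝ)..T, G t *ᵥ ξ := by
            apply intervalIntegral.integral_congr
            intro t _
            exact hint t
        _ = W *ᵥ ξ := (hWv ξ).symm
        _ = η := hξ
end

section
/- Suppose Σ : [0,T] → ℝ^{d×d} is continuously differentiable and satisfies the differential Riccati equation dΣ_t/dt = Aᵀ Σ_t + Σ_t A + Q − Σ_t H R⁻¹ Hᵀ Σ_t for all t ∈ [0,T], with initial condition Σ_0. Let u : [0,T] → ℝ^m be continuous and let y : [0,T] → ℝ^d be continuously differentiable with −dy_t/dt = A y_t + H u_t for all t ∈ [0,T] and y_T = f. Then the following completion-of-squares identity holds: y_0ᵀ Σ_0 y_0 + ∫₀^T (y_tᵀ Q y_t + u_tᵀ R u_t) dt = fᵀ Σ_T f + ∫₀^T (u_t + R⁻¹ Hᵀ Σ_t y_t)ᵀ R (u_t + R⁻¹ Hᵀ Σ_t y_t) dt. -/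
open Matrix intervalIntegral

namespace CSQhelp

/-- multiplication of square "matrices" represented as plain pi functions -/
def mulE {d : ℕ} (X Y : Fin d → Fin d → ℝ) : Fin d → Fin d → ℝ :=
  fun i j => ∑ k, X i k * Y k j

/-- view a matrix as a plain pi function -/
def toE {d : ℕ} (P : Matrix (Fin d) (Fin d) ℝ) : Fin d → Fin d → ℝ :=
  fun i j => P i j

lemma mulE_toE {d : ℕ} (P Q : Matrix (Fin d) (Fin d) ℝ) :
    mulE (toE P) (toE Q) = toE (P * Q) := by
  funext i j
  simp [mulE, toE, Matrix.mul_apply]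

lemma toE_add {d : ℕ} (P Q : Matrix (Fin d) (Fin d) ℝ) : toE (P + Q) = toE P + toE Q := rfl

lemma toE_sub {d : ℕ} (P Q : Matrix (Fin d) (Fin d) ℝ) : toE (P - Q) = toE P - toE Q := rfl

lemma entry_le {d : ℕ} (X : Fin d → Fin d → ℝ) (i j : Fin d) : |X i j| ≤ ‖X‖ := by
  calc |X i j| = ‖X i j‖ := (Real.norm_eq_abs _).symm
    _ ≤ ‖X i‖ := norm_le_pi_norm (X i) j
    _ ≤ ‖X‖ := norm_le_pi_norm X i

lemma norm_mulE_le {d : ℕ} (X Y : Fin d → Fin d → ℝ) : ‖mulE X Y‖ ≤ d * ‖X‖ * ‖Y‖ := by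
  have h : ∀ i j, ‖mulE X Y i j‖ ≤ d * ‖X‖ * ‖Y‖ := by
    intro i j
    rw [Real.norm_eq_abs]
    calc |∑ k, X i k * Y k j| ≤ ∑ k, |X i k * Y k j| := Finset.abs_sum_le_sum_abs _ _
      _ ≤ ∑ _k : Fin d, ‖X‖ * ‖Y‖ := Finset.sum_le_sum fun k _ => by
          rw [abs_mul]
          exact mul_le_mul (entry_le X i k) (entry_le Y k j) (abs_nonneg _) (norm_nonneg _)
      _ = d * ‖X‖ * ‖Y‖ := by
          rw [Finset.sum_const, Finset.card_univ, Fintype.card_fin, nsmul_eq_mul, mul_assoc]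
  refine (pi_norm_le_iff_of_nonneg (by positivity)).2 fun i =>
    (pi_norm_le_iff_of_nonneg (by positivity)).2 fun j => h i j

lemma norm_toE_transpose_le {d : ℕ} (P : Matrix (Fin d) (Fin d) ℝ) :
    ‖toE Pᵀ‖ ≤ ‖toE P‖ := by
  refine (pi_norm_le_iff_of_nonneg (norm_nonneg _)).2 fun i =>
    (pi_norm_le_iff_of_nonneg (norm_nonneg _)).2 fun j => ?_
  rw [Real.norm_eq_abs]
  exact entry_le (toE P) j i

lemma mulE_sub_left {d : ℕ} (X Y Z : Fin d → Fin d → ℝ) :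
    mulE (X - Y) Z = mulE X Z - mulE Y Z := by
  funext i j
  simp [mulE, sub_mul, Finset.sum_sub_distrib]

lemma mulE_sub_right {d : ℕ} (X Y Z : Fin d → Fin d → ℝ) :
    mulE X (Y - Z) = mulE X Y - mulE X Z := by
  funext i j
  simp [mulE, mul_sub, Finset.sum_sub_distrib]

lemma mulE_zero_left {d : ℕ} (X : Fin d → Fin d → ℝ) : mulE (0 : Fin d → Fin d → ℝ) X = 0 := by
  funext i j; simp [mulE]

lemma mulE_zero_right {d : ℕ} (X : Fin d → Fin d → ℝ) : mulE X (0 : Fin d → Fin d → ℝ) = 0 := by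
  funext i j; simp [mulE]

lemma riccati_antisym {d : ℕ} (A S Q M : Matrix (Fin d) (Fin d) ℝ) (hQ : Qᵀ = Q)
    (hM : Mᵀ = M) :
    (Aᵀ * S + S * A + Q - S * M * S) - (Aᵀ * S + S * A + Q - S * M * S)ᵀ
      = Aᵀ * (S - Sᵀ) + (S - Sᵀ) * A - ((S * M) * (S - Sᵀ) + (S - Sᵀ) * (M * Sᵀ)) := by
  simp only [Matrix.transpose_sub, Matrix.transpose_add, Matrix.transpose_mul,
    Matrix.transpose_transpose, hQ, hM]
  noncomm_ring

end CSQhelp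
namespace CSQhelp

lemma swap_dot {n p : ℕ} (P : Matrix (Fin n) (Fin p) ℝ) (x : Fin n → ℝ) (z : Fin p → ℝ) :
    x ⬝ᵥ (P *ᵥ z) = (Pᵀ *ᵥ x) ⬝ᵥ z := by
  rw [dotProduct_mulVec, mulVec_transpose]

lemma key_algebra {d m : ℕ} (A : Matrix (Fin d) (Fin d) ℝ) (H : Matrix (Fin d) (Fin m) ℝ)
    (Q S : Matrix (Fin d) (Fin d) ℝ) (R Rinv : Matrix (Fin m) (Fin m) ℝ)
    (hRT : Rᵀ = R) (hRinv : R * Rinv = 1) (hS : Sᵀ = S) (y : Fin d → ℝ) (u : Fin m → ℝ) :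
    (-(A *ᵥ y + H *ᵥ u)) ⬝ᵥ (S *ᵥ y)
      + y ⬝ᵥ ((Aᵀ * S + S * A + Q - S * H * Rinv * Hᵀ * S) *ᵥ y)
      + y ⬝ᵥ (S *ᵥ (-(A *ᵥ y + H *ᵥ u)))
      = (y ⬝ᵥ (Q *ᵥ y) + u ⬝ᵥ (R *ᵥ u))
        - (u + Rinv *ᵥ (Hᵀ *ᵥ (S *ᵥ y))) ⬝ᵥ (R *ᵥ (u + Rinv *ᵥ (Hᵀ *ᵥ (S *ᵥ y)))) := by
  set a := S *ᵥ y with ha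
  set b := Hᵀ *ᵥ a with hb
  set k := Rinv *ᵥ b with hk
  have hRk : R *ᵥ k = b := by rw [hk, mulVec_mulVec, hRinv, one_mulVec]
  have hya : ∀ w : Fin d → ℝ, y ⬝ᵥ (S *ᵥ w) = a ⬝ᵥ w := by
    intro w; rw [swap_dot, hS, ha]
  -- term 1
  have t1 : (-(A *ᵥ y + H *ᵥ u)) ⬝ᵥ a = -((A *ᵥ y) ⬝ᵥ a + (b ⬝ᵥ u)) := by
    rw [neg_dotProduct, add_dotProduct]
    congr 1
    congr 1
    rw [dotProduct_comm, swap_dot, hb, dotProduct_comm]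
  -- term 2
  have t2 : y ⬝ᵥ ((Aᵀ * S + S * A + Q - S * H * Rinv * Hᵀ * S) *ᵥ y)
      = (A *ᵥ y) ⬝ᵥ a + a ⬝ᵥ (A *ᵥ y) + y ⬝ᵥ (Q *ᵥ y) - b ⬝ᵥ k := by
    rw [Matrix.sub_mulVec, Matrix.add_mulVec, Matrix.add_mulVec,
      dotProduct_sub, dotProduct_add, dotProduct_add]
    congr 1
    · congr 1
      · congr 1
        · rw [← Matrix.mulVec_mulVec, swap_dot, Matrix.transpose_transpose, ← ha]
        · rw [← Matrix.mulVec_mulVec, hya]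
    · have : S * H * Rinv * Hᵀ * S = S * (H * (Rinv * (Hᵀ * S))) := by
        simp only [Matrix.mul_assoc]
      rw [this, ← Matrix.mulVec_mulVec, hya, ← Matrix.mulVec_mulVec,
        ← Matrix.mulVec_mulVec, ← Matrix.mulVec_mulVec, ← ha, ← hb, ← hk, swap_dot, ← hb]
  -- term 3
  have t3 : y ⬝ᵥ (S *ᵥ (-(A *ᵥ y + H *ᵥ u))) = -(a ⬝ᵥ (A *ᵥ y) + b ⬝ᵥ u) := by
    rw [hya, dotProduct_neg, dotProduct_add]
    congr 2
    rw [swap_dot, ← hb]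
  -- RHS expansion
  have rhs : (u + k) ⬝ᵥ (R *ᵥ (u + k))
      = u ⬝ᵥ (R *ᵥ u) + u ⬝ᵥ b + b ⬝ᵥ u + b ⬝ᵥ k := by
    rw [Matrix.mulVec_add, hRk, add_dotProduct, dotProduct_add, dotProduct_add]
    have h1 : k ⬝ᵥ (R *ᵥ u) = b ⬝ᵥ u := by
      rw [swap_dot, hRT, hRk]
    have h2 : k ⬝ᵥ b = b ⬝ᵥ k := dotProduct_comm _ _
    rw [h1, h2]
    ring
  rw [t1, t2, t3, rhs, dotProduct_comm u b]
  ring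

end CSQhelp

open CSQhelp
/-- completion-of-squares identity for the minimum variance LQ cost along
a solution `Sg` of the differential Riccati equation and a solution `y` of the
backward-in-time dual control system with terminal condition `y_T = f`. -/
theorem completion_of_squares_identity
    (d m : ℕ) (hd : 0 < d) (hm : 0 < m) (T : ℝ) (hT : 0 < T)
    (A : Matrix (Fin d) (Fin d) ℝ) (H : Matrix (Fin d) (Fin m) ℝ) (f : Fin d → ℝ)
    (Q : Matrix (Fin d) (Fin d) ℝ) (R : Matrix (Fin m) (Fin m) ℝ)
    (Sigma0 : Matrix (Fin d) (Fin d) ℝ)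
    (hQ : Q.PosSemidef) (hR : R.PosDef) (hSigma0 : Sigma0.PosSemidef)
    (Sg : ℝ → Matrix (Fin d) (Fin d) ℝ) (hSg0 : Sg 0 = Sigma0)
    (hSgC1 : ∀ i j, ContDiffOn ℝ 1 (fun t => Sg t i j) (Set.Icc 0 T))
    (hRic : ∀ t ∈ Set.Icc (0:ℝ) T, ∀ i j,
      HasDerivAt (fun s => Sg s i j)
        ((Aᵀ * Sg t + Sg t * A + Q - Sg t * H * R⁻¹ * Hᵀ * Sg t) i j) t)
    (u : ℝ → Fin m → ℝ) (hu : ContinuousOn u (Set.Icc 0 T))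
    (y : ℝ → Fin d → ℝ)
    (hyC1 : ContDiffOn ℝ 1 y (Set.Icc 0 T))
    (hy : ∀ t ∈ Set.Icc (0:ℝ) T,
      HasDerivAt y (-(A.mulVec (y t) + H.mulVec (u t))) t)
    (hyT : y T = f) :
    (y 0) ⬝ᵥ (Sg 0).mulVec (y 0) +
        (∫ t in (0:ℝ)..T, ((y t) ⬝ᵥ Q.mulVec (y t) + (u t) ⬝ᵥ R.mulVec (u t))) =
      f ⬝ᵥ (Sg T).mulVec f +
        (∫ t in (0:ℝ)..T,
          (u t + R⁻¹.mulVec (Hᵀ.mulVec ((Sg t).mulVec (y t)))) ⬝ᵥ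
            R.mulVec (u t + R⁻¹.mulVec (Hᵀ.mulVec ((Sg t).mulVec (y t))))) := by
  have hT0 : (0:ℝ) ≤ T := hT.le
  -- basic facts about R, Q, Sigma0
  have hRdet : IsUnit R.det := hR.det_pos.ne'.isUnit
  have hRinv : R * R⁻¹ = 1 := Matrix.mul_nonsing_inv R hRdet
  have hRT : Rᵀ = R := by
    rw [← Matrix.conjTranspose_eq_transpose_of_trivial]; exact hR.isHermitian
  have hRinvT : R⁻¹ᵀ = R⁻¹ := by rw [Matrix.transpose_nonsing_inv, hRT]
  have hQT : Qᵀ = Q := by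
    rw [← Matrix.conjTranspose_eq_transpose_of_trivial]; exact hQ.isHermitian
  have hS0T : Sigma0ᵀ = Sigma0 := by
    rw [← Matrix.conjTranspose_eq_transpose_of_trivial]; exact hSigma0.isHermitian
  set M : Matrix (Fin d) (Fin d) ℝ := H * R⁻¹ * Hᵀ with hMdef
  have hMT : Mᵀ = M := by
    rw [hMdef]
    simp [Matrix.transpose_mul, hRinvT, Matrix.mul_assoc]
  ------------------------------------------------------------------
  -- STEP A : Sg t is symmetric for t ∈ [0, T]
  ------------------------------------------------------------------
  -- continuity of Sg (as pi-valued function)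
  have hSgcont : ContinuousOn (fun t => toE (Sg t)) (Set.Icc 0 T) := by
    rw [continuousOn_pi]; intro i; rw [continuousOn_pi]; intro j
    exact (hSgC1 i j).continuousOn
  obtain ⟨B0, hB0⟩ := isCompact_Icc.exists_bound_of_continuousOn hSgcont
  set B := max B0 0 with hBdef
  have hBnn : (0:ℝ) ≤ B := le_max_right _ _
  have hB : ∀ s ∈ Set.Icc (0:ℝ) T, ‖toE (Sg s)‖ ≤ B := fun s hs =>
    (hB0 s hs).trans (le_max_left _ _)
  -- clamp
  set π : ℝ → ℝ := fun t => min (max t 0) T with hπdef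
  have hπmem : ∀ t, π t ∈ Set.Icc (0:ℝ) T := fun t =>
    ⟨le_min (le_max_right t 0) hT0, min_le_right _ _⟩
  have hπid : ∀ t ∈ Set.Ico (0:ℝ) T, π t = t := by
    intro t ht
    simp only [hπdef]
    rw [max_eq_left ht.1, min_eq_left ht.2.le]
  -- the vector field
  set v : ℝ → (Fin d → Fin d → ℝ) → (Fin d → Fin d → ℝ) := fun t X =>
    mulE (toE Aᵀ) X + mulE X (toE A)
      - (mulE (toE (Sg (π t) * M)) X + mulE X (toE (M * (Sg (π t))ᵀ))) with hvdef
  -- linearity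
  have hvlin : ∀ t X Y, v t X - v t Y = v t (X - Y) := by
    intro t X Y
    simp only [hvdef, mulE_sub_left, mulE_sub_right]
    abel
  have hv0 : ∀ t, v t 0 = 0 := by
    intro t
    simp only [hvdef]
    rw [mulE_zero_left, mulE_zero_right, mulE_zero_left, mulE_zero_right]
    simp
  -- Lipschitz constant
  set Kr : ℝ := ↑d * ‖toE Aᵀ‖ + ↑d * ‖toE A‖ + ↑d * (↑d * B * ‖toE M‖)
      + ↑d * (↑d * ‖toE M‖ * B) with hKrdef
  have hKrnn : 0 ≤ Kr := by
    have := norm_nonneg (toE Aᵀ); have := norm_nonneg (toE A); have := norm_nonneg (toE M)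
    have : (0:ℝ) ≤ ↑d := Nat.cast_nonneg d
    positivity
  have hvbound : ∀ t X, ‖v t X‖ ≤ Kr * ‖X‖ := by
    intro t X
    have h1 : ‖mulE (toE Aᵀ) X‖ ≤ ↑d * ‖toE Aᵀ‖ * ‖X‖ := norm_mulE_le _ _
    have h2 : ‖mulE X (toE A)‖ ≤ ↑d * ‖X‖ * ‖toE A‖ := norm_mulE_le _ _
    have hSM : ‖toE (Sg (π t) * M)‖ ≤ ↑d * B * ‖toE M‖ := by
      rw [← mulE_toE]
      refine (norm_mulE_le _ _).trans ?_
      have hb := hB _ (hπmem t)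
      gcongr <;> try exact hb
    have hMS : ‖toE (M * (Sg (π t))ᵀ)‖ ≤ ↑d * ‖toE M‖ * B := by
      rw [← mulE_toE]
      refine (norm_mulE_le _ _).trans ?_
      have h1 := (norm_toE_transpose_le (Sg (π t))).trans (hB _ (hπmem t))
      gcongr <;> try exact h1
    have h3 : ‖mulE (toE (Sg (π t) * M)) X‖ ≤ ↑d * (↑d * B * ‖toE M‖) * ‖X‖ := by
      refine (norm_mulE_le _ _).trans ?_
      gcongr <;> try exact hSM
    have h4 : ‖mulE X (toE (M * (Sg (π t))ᵀ))‖ ≤ ↑d * (↑d * ‖toE M‖ * B) * ‖X‖ := by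
      refine (norm_mulE_le _ _).trans ?_
      calc ↑d * ‖X‖ * ‖toE (M * (Sg (π t))ᵀ)‖ ≤ ↑d * ‖X‖ * (↑d * ‖toE M‖ * B) := by
            gcongr <;> try exact hMS
        _ = ↑d * (↑d * ‖toE M‖ * B) * ‖X‖ := by ring
    calc ‖v t X‖ ≤ ‖mulE (toE Aᵀ) X + mulE X (toE A)‖
          + ‖mulE (toE (Sg (π t) * M)) X + mulE X (toE (M * (Sg (π t))ᵀ))‖ := norm_sub_le _ _
      _ ≤ (‖mulE (toE Aᵀ) X‖ + ‖mulE X (toE A)‖)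
          + (‖mulE (toE (Sg (π t) * M)) X‖ + ‖mulE X (toE (M * (Sg (π t))ᵀ))‖) :=
            add_le_add (norm_add_le _ _) (norm_add_le _ _)
      _ ≤ ↑d * ‖toE Aᵀ‖ * ‖X‖ + ↑d * ‖X‖ * ‖toE A‖
          + (↑d * (↑d * B * ‖toE M‖) * ‖X‖ + ↑d * (↑d * ‖toE M‖ * B) * ‖X‖) := by
            gcongr <;> first | exact h1 | exact h2 | exact h3 | exact h4
      _ = Kr * ‖X‖ := by rw [hKrdef]; ring
  have hvLip : ∀ t, LipschitzOnWith Kr.toNNReal (v t) Set.univ := by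
    intro t
    refine LipschitzWith.lipschitzOnWith ?_
    refine LipschitzWith.of_dist_le_mul fun X Y => ?_
    rw [dist_eq_norm, dist_eq_norm, Real.coe_toNNReal _ hKrnn, hvlin]
    exact hvbound t (X - Y)
  -- the antisymmetric part
  set C : ℝ → (Fin d → Fin d → ℝ) := fun t i j => Sg t i j - Sg t j i with hCdef
  have hCt : ∀ t, C t = toE (Sg t - (Sg t)ᵀ) := by
    intro t; funext i j; simp [hCdef, toE]
  have hCc : ContinuousOn C (Set.Icc 0 T) := by
    rw [continuousOn_pi]; intro i; rw [continuousOn_pi]; intro j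
    exact (hSgC1 i j).continuousOn.sub (hSgC1 j i).continuousOn
  have hCd : ∀ t ∈ Set.Ico (0:ℝ) T, HasDerivWithinAt C (v t (C t)) (Set.Ici t) t := by
    intro t ht
    have ht' : t ∈ Set.Icc (0:ℝ) T := Set.Ico_subset_Icc_self ht
    set W : Matrix (Fin d) (Fin d) ℝ :=
      Aᵀ * Sg t + Sg t * A + Q - Sg t * H * R⁻¹ * Hᵀ * Sg t with hWdef
    have h1 : HasDerivAt C (toE (W - Wᵀ)) t := by
      rw [hasDerivAt_pi]; intro i; rw [hasDerivAt_pi]; intro j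
      have := (hRic t ht' i j).fun_sub (hRic t ht' j i)
      simp only [hCdef, toE, Matrix.sub_apply, Matrix.transpose_apply]
      exact this
    have h2 : v t (C t) = toE (W - Wᵀ) := by
      simp only [hvdef]
      rw [hπid t ht, hCt]
      simp only [mulE_toE]
      rw [← toE_add, ← toE_add, ← toE_sub]
      congr 1
      have hW' : W = Aᵀ * Sg t + Sg t * A + Q - Sg t * M * Sg t := by
        rw [hWdef, hMdef]
        simp only [Matrix.mul_assoc]
      rw [hW', riccati_antisym A (Sg t) Q M hQT hMT]
    rw [h2]
    exact h1.hasDerivWithinAt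
  have hC0 : C 0 = (fun _ => (0 : Fin d → Fin d → ℝ)) 0 := by
    funext i j
    have h := congrFun (congrFun hS0T i) j
    simp only [Matrix.transpose_apply] at h
    simp only [hCdef, hSg0, Pi.zero_apply]
    linarith [h]
  have huniq : Set.EqOn C (fun _ => (0 : Fin d → Fin d → ℝ)) (Set.Icc 0 T) := by
    refine ODE_solution_unique_of_mem_Icc_right (fun t _ => hvLip t) hCc hCd (fun t _ => Set.mem_univ _)
      continuousOn_const ?_ (fun t _ => Set.mem_univ _) hC0
    intro t _
    have : v t ((fun _ => (0 : Fin d → Fin d → ℝ)) t) = 0 := hv0 t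
    rw [this]
    exact hasDerivWithinAt_const _ _ _
  have hsym : ∀ t ∈ Set.Icc (0:ℝ) T, (Sg t)ᵀ = Sg t := by
    intro t ht
    funext i j
    have h := congrFun (congrFun (huniq ht) i) j
    simp only [hCdef, Pi.zero_apply] at h
    rw [Matrix.transpose_apply]
    linarith [h]
  ------------------------------------------------------------------
  -- STEP B : completion of squares + FTC
  ------------------------------------------------------------------
  set L : ℝ → ℝ := fun t => (y t) ⬝ᵥ Q.mulVec (y t) + (u t) ⬝ᵥ R.mulVec (u t) with hLdef
  set φ : ℝ → ℝ := fun t =>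
    (u t + R⁻¹.mulVec (Hᵀ.mulVec ((Sg t).mulVec (y t)))) ⬝ᵥ
      R.mulVec (u t + R⁻¹.mulVec (Hᵀ.mulVec ((Sg t).mulVec (y t)))) with hφdef
  set G : ℝ → ℝ := fun t => (y t) ⬝ᵥ (Sg t).mulVec (y t) with hGdef
  have hGd : ∀ t ∈ Set.Icc (0:ℝ) T, HasDerivAt G (L t - φ t) t := by
    intro t ht
    have hyc := hasDerivAt_pi.1 (hy t ht)
    set v0 : Fin d → ℝ := -(A *ᵥ y t + H *ᵥ u t) with hv0def
    set W : Matrix (Fin d) (Fin d) ℝ :=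
      Aᵀ * Sg t + Sg t * A + Q - Sg t * H * R⁻¹ * Hᵀ * Sg t with hWdef
    have hd1 : HasDerivAt (fun s => ∑ i, y s i * ∑ j, Sg s i j * y s j)
        (∑ i, (v0 i * ∑ j, Sg t i j * y t j
          + y t i * ∑ j, (W i j * y t j + Sg t i j * v0 j))) t := by
      refine HasDerivAt.fun_sum fun i _ => ?_
      exact (hyc i).mul (HasDerivAt.fun_sum fun j _ => (hRic t ht i j).mul (hyc j))
    have hGfun : G = fun s => ∑ i, y s i * ∑ j, Sg s i j * y s j := by
      funext s
      simp [hGdef, dotProduct, Matrix.mulVec]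
    rw [hGfun]
    convert hd1 using 1
    have split : (∑ i, (v0 i * ∑ j, Sg t i j * y t j
          + y t i * ∑ j, (W i j * y t j + Sg t i j * v0 j)))
        = v0 ⬝ᵥ (Sg t *ᵥ y t) + (y t ⬝ᵥ (W *ᵥ y t) + y t ⬝ᵥ (Sg t *ᵥ v0)) := by
      simp [dotProduct, Matrix.mulVec, Finset.sum_add_distrib, mul_add]
    rw [split]
    have hkey := key_algebra A H Q (Sg t) R R⁻¹ hRT hRinv (hsym t ht) (y t) (u t)
    simp only [hLdef, hφdef, hWdef, hv0def]
    rw [← hkey]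
    ring
  have huIcc : Set.uIcc (0:ℝ) T = Set.Icc 0 T := Set.uIcc_of_le hT0
  -- continuity of the integrands
  have hyc : ContinuousOn y (Set.Icc 0 T) := hyC1.continuousOn
  have hycomp : ∀ i, ContinuousOn (fun t => y t i) (Set.Icc 0 T) :=
    continuousOn_pi.1 hyc
  have hucomp : ∀ i, ContinuousOn (fun t => u t i) (Set.Icc 0 T) :=
    continuousOn_pi.1 hu
  have hScomp : ∀ i j, ContinuousOn (fun t => Sg t i j) (Set.Icc 0 T) := fun i j =>
    (hSgC1 i j).continuousOn
  have hLc : ContinuousOn L (Set.Icc 0 T) := by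
    simp only [hLdef, dotProduct, Matrix.mulVec]
    apply ContinuousOn.add
    · apply continuousOn_finset_sum
      intro i _
      exact (hycomp i).mul (continuousOn_finset_sum _ fun j _ =>
        (continuousOn_const.mul (hycomp j)))
    · apply continuousOn_finset_sum
      intro i _
      exact (hucomp i).mul (continuousOn_finset_sum _ fun j _ =>
        (continuousOn_const.mul (hucomp j)))
  have hφc : ContinuousOn φ (Set.Icc 0 T) := by
    have wc : ∀ i, ContinuousOn
        (fun t => u t i + ∑ j, R⁻¹ i j * ∑ a, Hᵀ j a * ∑ b, Sg t a b * y t b)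
        (Set.Icc 0 T) := by
      intro i
      refine (hucomp i).add ?_
      refine continuousOn_finset_sum _ fun j _ => continuousOn_const.mul ?_
      refine continuousOn_finset_sum _ fun a _ => continuousOn_const.mul ?_
      exact continuousOn_finset_sum _ fun b _ => (hScomp a b).mul (hycomp b)
    simp only [hφdef, dotProduct, Matrix.mulVec, Pi.add_apply]
    refine continuousOn_finset_sum _ fun i _ => ContinuousOn.mul (wc i) ?_
    exact continuousOn_finset_sum _ fun j _ => continuousOn_const.mul (wc j)
  have hLi : IntervalIntegrable L MeasureTheory.volume 0 T :=
    (huIcc ▸ hLc).intervalIntegrable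
  have hφi : IntervalIntegrable φ MeasureTheory.volume 0 T :=
    (huIcc ▸ hφc).intervalIntegrable
  have hFTC : (∫ t in (0:ℝ)..T, (L t - φ t)) = G T - G 0 := by
    refine integral_eq_sub_of_hasDerivAt (fun t ht => hGd t (huIcc ▸ ht)) ?_
    exact ((huIcc ▸ (hLc.sub hφc)) : ContinuousOn _ (Set.uIcc 0 T)).intervalIntegrable
  rw [intervalIntegral.integral_sub hLi hφi] at hFTC
  have hGT : G T = f ⬝ᵥ (Sg T).mulVec f := by rw [hGdef]; simp [hyT]
  have hG0 : G 0 = (y 0) ⬝ᵥ (Sg 0).mulVec (y 0) := rfl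
  have hIL : (∫ t in (0:ℝ)..T, ((y t) ⬝ᵥ Q.mulVec (y t) + (u t) ⬝ᵥ R.mulVec (u t)))
      = ∫ t in (0:ℝ)..T, L t := rfl
  have hIφ : (∫ t in (0:ℝ)..T,
      (u t + R⁻¹.mulVec (Hᵀ.mulVec ((Sg t).mulVec (y t)))) ⬝ᵥ
        R.mulVec (u t + R⁻¹.mulVec (Hᵀ.mulVec ((Sg t).mulVec (y t)))))
      = ∫ t in (0:ℝ)..T, φ t := rfl
  rw [hIL, hIφ, ← hGT, ← hG0]
  linarith
end

section
/- Suppose Σ : [0,T] → ℝ^{d×d} is continuously differentiable, satisfies the differential Riccati equation dΣ_t/dt = Aᵀ Σ_t + Σ_t A + σσᵀ − Σ_t H R⁻¹ Hᵀ Σ_t for all t ∈ [0,T] with initial condition Σ_0, and Σ_t is invertible for every t ∈ [0,T]. Let ζ : [0,T] → ℝ^m be continuous and let x̂ : [0,T] → ℝ^d be the continuously differentiable solution of dx̂_t/dt = Aᵀ x̂_t + Σ_t H R⁻¹ (ζ_t − Hᵀ x̂_t) with x̂_0 = m_0. Then for every x_0 ∈ ℝ^d, every continuous v : [0,T] → ℝ^n,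 and the continuously differentiable x : [0,T] → ℝ^d solving dx_t/dt = Aᵀ x_t + σ v_t with x(0) = x_0, the minimum energy cost satisfies (x_0 − m_0)ᵀ Σ_0⁻¹ (x_0 − m_0) + ∫₀^T (|v_t|² + (ζ_t − Hᵀ x_t)ᵀ R⁻¹ (ζ_t − Hᵀ x_t)) dt ≥ ∫₀^T (ζ_t − Hᵀ x̂_t)ᵀ R⁻¹ (ζ_t − Hᵀ x̂_t) dt. -/
open Matrix intervalIntegral

section Helpers

variable {k d m n p q r : ℕ}

variable {k : ℕ}

/-- det of an entrywise-differentiable matrix family is differentiable. -/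
lemma my_det_diffAt {M : ℝ → Matrix (Fin k) (Fin k) ℝ} {t : ℝ}
    (h : ∀ i j, DifferentiableAt ℝ (fun s => M s i j) t) :
    DifferentiableAt ℝ (fun s => (M s).det) t := by
  have : (fun s => (M s).det)
      = fun s => ∑ σ : Equiv.Perm (Fin k), (Equiv.Perm.sign σ : ℝ) * ∏ i, M s (σ i) i := by
    funext s; rw [Matrix.det_apply]
    simp [Units.smul_def, zsmul_eq_mul]
  rw [this]
  exact DifferentiableAt.fun_sum fun σ _ =>
    (differentiableAt_const _).mul (DifferentiableAt.fun_finsetProd fun i _ => h _ _)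

lemma my_det_contOn {M : ℝ → Matrix (Fin k) (Fin k) ℝ} {s : Set ℝ}
    (h : ∀ i j, ContinuousOn (fun u => M u i j) s) :
    ContinuousOn (fun u => (M u).det) s := by
  have : (fun u => (M u).det)
      = fun u => ∑ σ : Equiv.Perm (Fin k), (Equiv.Perm.sign σ : ℝ) * ∏ i, M u (σ i) i := by
    funext u; rw [Matrix.det_apply]
    simp [Units.smul_def, zsmul_eq_mul]
  rw [this]
  apply continuousOn_finset_sum _
  intro σ _
  exact continuousOn_const.mul (continuousOn_finset_prod _ fun i _ => h _ _)

lemma my_adj_diffAt {M : ℝ → Matrix (Fin k) (Fin k) ℝ} {t : ℝ}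
    (h : ∀ i j, DifferentiableAt ℝ (fun s => M s i j) t) (i j : Fin k) :
    DifferentiableAt ℝ (fun s => (M s).adjugate i j) t := by
  simp only [Matrix.adjugate_apply]
  apply my_det_diffAt
  intro a b
  rcases eq_or_ne a j with rfl | hne
  · simp only [Matrix.updateRow_self]
    exact differentiableAt_const _
  · simp only [Matrix.updateRow_ne hne]
    exact h a b

lemma my_inv_entry_diffAt {M : ℝ → Matrix (Fin k) (Fin k) ℝ} {t : ℝ}
    (h : ∀ i j, DifferentiableAt ℝ (fun s => M s i j) t)
    (hdet : (M t).det ≠ 0) (i j : Fin k) :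
    DifferentiableAt ℝ (fun s => (M s)⁻¹ i j) t := by
  have : (fun s => (M s)⁻¹ i j) = fun s => ((M s).det)⁻¹ * (M s).adjugate i j := by
    funext s; rw [Matrix.inv_def]; simp [Ring.inverse_eq_inv]
  rw [this]
  exact ((my_det_diffAt h).inv hdet).mul (my_adj_diffAt h i j)

lemma my_inv_entry_contOn {M : ℝ → Matrix (Fin k) (Fin k) ℝ} {s : Set ℝ}
    (h : ∀ i j, ContinuousOn (fun u => M u i j) s)
    (hdet : ∀ u ∈ s, (M u).det ≠ 0) (i j : Fin k) :
    ContinuousOn (fun u => (M u)⁻¹ i j) s := by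
  have : (fun u => (M u)⁻¹ i j) = fun u => ((M u).det)⁻¹ * (M u).adjugate i j := by
    funext u; rw [Matrix.inv_def]; simp [Ring.inverse_eq_inv]
  rw [this]
  refine ContinuousOn.mul ((my_det_contOn h).inv₀ hdet) ?_
  simp only [Matrix.adjugate_apply]
  apply my_det_contOn
  intro a b
  rcases eq_or_ne a j with rfl | hne
  · simp only [Matrix.updateRow_self]
    exact continuousOn_const
  · simp only [Matrix.updateRow_ne hne]
    exact h a b

variable {d m n p q r : ℕ}

/-- swap lemma -/
lemma my_dv_swap (M : Matrix (Fin p) (Fin q) ℝ) (x : Fin p → ℝ) (y : Fin q → ℝ) :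
    x ⬝ᵥ M.mulVec y = y ⬝ᵥ Mᵀ.mulVec x := by
  rw [Matrix.dotProduct_mulVec, ← Matrix.mulVec_transpose, dotProduct_comm]

lemma my_mdotm (M : Matrix (Fin p) (Fin q) ℝ) (N : Matrix (Fin p) (Fin r) ℝ)
    (a : Fin q → ℝ) (b : Fin r → ℝ) :
    (M.mulVec a) ⬝ᵥ (N.mulVec b) = a ⬝ᵥ ((Mᵀ * N).mulVec b) := by
  rw [my_dv_swap, Matrix.mulVec_mulVec, my_dv_swap, Matrix.transpose_mul, Matrix.transpose_transpose]

/-- derivative of a time-dependent quadratic-like form -/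
lemma my_hasDerivAt_quad {u w : ℝ → Fin d → ℝ} {P : ℝ → Matrix (Fin d) (Fin d) ℝ}
    {u' w' : Fin d → ℝ} {P' : Matrix (Fin d) (Fin d) ℝ} {t : ℝ}
    (hu : ∀ i, HasDerivAt (fun s => u s i) (u' i) t)
    (hw : ∀ i, HasDerivAt (fun s => w s i) (w' i) t)
    (hP : ∀ i j, HasDerivAt (fun s => P s i j) (P' i j) t) :
    HasDerivAt (fun s => u s ⬝ᵥ (P s).mulVec (w s))
      (u' ⬝ᵥ (P t).mulVec (w t) + u t ⬝ᵥ P'.mulVec (w t) + u t ⬝ᵥ (P t).mulVec w') t := by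
  have h1 : (fun s => u s ⬝ᵥ (P s).mulVec (w s))
      = fun s => ∑ i, ∑ j, u s i * (P s i j * w s j) := by
    funext s; simp [dotProduct, Matrix.mulVec, Finset.mul_sum]
  rw [h1]
  have h2 : ∀ i ∈ Finset.univ, ∀ j ∈ (Finset.univ : Finset (Fin d)),
      HasDerivAt (fun s => u s i * (P s i j * w s j))
        (u' i * (P t i j * w t j)
          + u t i * (P' i j * w t j + P t i j * w' j)) t := by
    intro i _ j _
    exact (hu i).mul ((hP i j).mul (hw j))
  have hinner : ∀ i ∈ (Finset.univ : Finset (Fin d)),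
      HasDerivAt (fun s => ∑ j, u s i * (P s i j * w s j))
        (∑ j, (u' i * (P t i j * w t j)
          + u t i * (P' i j * w t j + P t i j * w' j))) t :=
    fun i hi => HasDerivAt.fun_sum (h2 i hi)
  have h3 : HasDerivAt (fun s => ∑ i, ∑ j, u s i * (P s i j * w s j))
      (∑ i, ∑ j, (u' i * (P t i j * w t j)
          + u t i * (P' i j * w t j + P t i j * w' j))) t :=
    HasDerivAt.fun_sum hinner
  convert h3 using 1
  simp only [dotProduct, Matrix.mulVec, Finset.mul_sum, mul_add, Finset.sum_add_distrib]
  ring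

/-- derivative of the inverse of a matrix family. -/
lemma my_hasDerivAt_inv {M : ℝ → Matrix (Fin d) (Fin d) ℝ}
    {M' : Matrix (Fin d) (Fin d) ℝ} {t : ℝ}
    (h : ∀ i j, HasDerivAt (fun s => M s i j) (M' i j) t)
    (hdet : (M t).det ≠ 0) (i j : Fin d) :
    HasDerivAt (fun s => (M s)⁻¹ i j)
      ((-((M t)⁻¹ * M' * (M t)⁻¹)) i j) t := by
  -- the inverse is differentiable
  have hdiff : ∀ a b, DifferentiableAt ℝ (fun s => (M s)⁻¹ a b) t :=
    my_inv_entry_diffAt (fun a b => (h a b).differentiableAt) hdet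
  set D : Matrix (Fin d) (Fin d) ℝ := fun a b => deriv (fun s => (M s)⁻¹ a b) t with hD
  have hDd : ∀ a b, HasDerivAt (fun s => (M s)⁻¹ a b) (D a b) t :=
    fun a b => (hdiff a b).hasDerivAt
  -- det is eventually nonzero
  have hdetc : ContinuousAt (fun s => (M s).det) t :=
    (my_det_diffAt (fun a b => (h a b).differentiableAt)).continuousAt
  have hev : ∀ᶠ s in nhds t, (M s).det ≠ 0 := hdetc.eventually_ne hdet
  -- differentiate M * M⁻¹ = 1
  have hprod : ∀ a b, HasDerivAt (fun s => (M s * (M s)⁻¹) a b)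
      ((M' * (M t)⁻¹ + M t * D) a b) t := by
    intro a b
    have : (fun s => (M s * (M s)⁻¹) a b) = fun s => ∑ k, M s a k * (M s)⁻¹ k b := by
      funext s; simp [Matrix.mul_apply]
    rw [this]
    have hsum : HasDerivAt (fun s => ∑ k, M s a k * (M s)⁻¹ k b)
        (∑ k, (M' a k * (M t)⁻¹ k b + M t a k * D k b)) t :=
      HasDerivAt.fun_sum (fun k _ => (h a k).mul (hDd k b))
    convert hsum using 1
    simp [Matrix.add_apply, Matrix.mul_apply, Finset.sum_add_distrib]
  have hconst : ∀ a b, HasDerivAt (fun s => (M s * (M s)⁻¹) a b) 0 t := by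
    intro a b
    have heq : (fun s => (M s * (M s)⁻¹) a b) =ᶠ[nhds t] fun _ => (1 : Matrix (Fin d) (Fin d) ℝ) a b := by
      filter_upwards [hev] with s hs
      rw [Matrix.mul_nonsing_inv _ (isUnit_iff_ne_zero.mpr hs)]
    exact (hasDerivAt_const t _).congr_of_eventuallyEq heq
  have hzero : M' * (M t)⁻¹ + M t * D = 0 := by
    ext a b
    have := (hprod a b).unique (hconst a b)
    simpa using this
  -- solve for D
  have hMD : M t * D = -(M' * (M t)⁻¹) :=
    eq_neg_of_add_eq_zero_left (by rwa [add_comm] at hzero)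
  have hDval : D = -((M t)⁻¹ * M' * (M t)⁻¹) := by
    have hinv : (M t)⁻¹ * M t = 1 := Matrix.nonsing_inv_mul _ (isUnit_iff_ne_zero.mpr hdet)
    calc D = ((M t)⁻¹ * M t) * D := by rw [hinv, one_mul]
    _ = (M t)⁻¹ * (M t * D) := by rw [Matrix.mul_assoc]
    _ = (M t)⁻¹ * (-(M' * (M t)⁻¹)) := by rw [hMD]
    _ = -((M t)⁻¹ * M' * (M t)⁻¹) := by
        rw [Matrix.mul_neg, Matrix.mul_assoc]
  rw [← hDval]
  exact hDd i j

variable {d m n p q r : ℕ}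

lemma my_key_algebra (A : Matrix (Fin d) (Fin d) ℝ) (H : Matrix (Fin d) (Fin m) ℝ)
    (σ : Matrix (Fin d) (Fin n) ℝ) (K : Matrix (Fin m) (Fin m) ℝ)
    (S P : Matrix (Fin d) (Fin d) ℝ)
    (hK : Kᵀ = K) (hS : Sᵀ = S) (hPS : P * S = 1) (hSP : S * P = 1) (hP : Pᵀ = P)
    (e : Fin d → ℝ) (vv : Fin n → ℝ) (w : Fin m → ℝ) :
    (Aᵀ.mulVec e + σ.mulVec vv - (S*H*K).mulVec w) ⬝ᵥ P.mulVec e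
      + e ⬝ᵥ (-(P * (Aᵀ*S + S*A + σ*σᵀ - S*H*K*Hᵀ*S) * P)).mulVec e
      + e ⬝ᵥ P.mulVec (Aᵀ.mulVec e + σ.mulVec vv - (S*H*K).mulVec w)
    = vv ⬝ᵥ vv + (w - Hᵀ.mulVec e) ⬝ᵥ K.mulVec (w - Hᵀ.mulVec e) - w ⬝ᵥ K.mulVec w
      - (vv - (σᵀ*P).mulVec e) ⬝ᵥ (vv - (σᵀ*P).mulVec e) := by
  have hPS' : ∀ (k : ℕ) (X : Matrix (Fin d) (Fin k) ℝ), P * (S * X) = X := by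
    intro k X; rw [← Matrix.mul_assoc, hPS, Matrix.one_mul]
  have hSP' : ∀ (k : ℕ) (X : Matrix (Fin d) (Fin k) ℝ), S * (P * X) = X := by
    intro k X; rw [← Matrix.mul_assoc, hSP, Matrix.one_mul]
  simp only [sub_dotProduct, add_dotProduct, dotProduct_sub, dotProduct_add,
    Matrix.mulVec_add, Matrix.mulVec_sub, Matrix.neg_mulVec, dotProduct_neg,
    Matrix.mulVec_mulVec, my_mdotm, Matrix.transpose_mul, Matrix.transpose_transpose,
    hK, hS, hP, mul_add, mul_sub, add_mul, sub_mul, Matrix.add_mulVec, Matrix.sub_mulVec,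
    Matrix.mul_assoc, hPS, hSP, hPS', hSP', Matrix.mul_one, Matrix.one_mul]
  have h2 : vv ⬝ᵥ (σᵀ * P) *ᵥ e = e ⬝ᵥ (P * σ) *ᵥ vv := by
    rw [my_dv_swap, Matrix.transpose_mul, Matrix.transpose_transpose, hP]
  have h3 : w ⬝ᵥ (K * Hᵀ) *ᵥ e = e ⬝ᵥ (H * K) *ᵥ w := by
    rw [my_dv_swap, Matrix.transpose_mul, Matrix.transpose_transpose, hK]
  have h4 : (σᵀ * P) *ᵥ e ⬝ᵥ vv = vv ⬝ᵥ (σᵀ * P) *ᵥ e := dotProduct_comm _ _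
  rw [h4, h2, h3]
  ring

variable {d m n p q r : ℕ}

lemma my_entry_le (f : Fin p → Fin q → ℝ) (i : Fin p) (j : Fin q) : |f i j| ≤ ‖f‖ :=
  le_trans (by simpa [Real.norm_eq_abs] using norm_le_pi_norm (f i) j) (norm_le_pi_norm f i)

lemma my_mul_entry_bound {p1 p2 p3 : ℕ} (X : Matrix (Fin p1) (Fin p2) ℝ)
    (Y : Matrix (Fin p2) (Fin p3) ℝ) (cX cY : ℝ)
    (hX : ∀ i j, |X i j| ≤ cX) (hY : ∀ i j, |Y i j| ≤ cY) (h0 : 0 ≤ cX) (i : Fin p1)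
    (j : Fin p3) : |(X * Y) i j| ≤ p2 * (cX * cY) := by
  rw [Matrix.mul_apply]
  calc |∑ k, X i k * Y k j| ≤ ∑ k, |X i k * Y k j| := Finset.abs_sum_le_sum_abs _ _
  _ ≤ ∑ _k : Fin p2, cX * cY := Finset.sum_le_sum (fun k _ => by
        rw [abs_mul]; exact mul_le_mul (hX i k) (hY k j) (abs_nonneg _) h0)
  _ = p2 * (cX * cY) := by simp [Finset.sum_const, Finset.card_univ]

lemma my_riccati_symm {T : ℝ} (hT : 0 < T)
    (A M1 C : Matrix (Fin d) (Fin d) ℝ) (hM1 : M1ᵀ = M1) (hC : Cᵀ = C)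
    (Sg : ℝ → Matrix (Fin d) (Fin d) ℝ) (hsym0 : (Sg 0)ᵀ = Sg 0)
    (hRic : ∀ t ∈ Set.Icc (0:ℝ) T, ∀ i j,
      HasDerivAt (fun s => Sg s i j) ((Aᵀ * Sg t + Sg t * A + C - Sg t * M1 * Sg t) i j) t)
    (hcont : ∀ i j, ContinuousOn (fun t => Sg t i j) (Set.Icc 0 T)) :
    ∀ t ∈ Set.Icc (0:ℝ) T, (Sg t)ᵀ = Sg t := by
  classical
  set Ric : ℝ → Matrix (Fin d) (Fin d) ℝ :=
    fun t => Aᵀ * Sg t + Sg t * A + C - Sg t * M1 * Sg t with hRicDef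
  set F : ℝ → Fin d → Fin d → ℝ := fun t i j => Sg t i j - Sg t j i with hFdef
  set F' : ℝ → Fin d → Fin d → ℝ := fun t i j => Ric t i j - Ric t j i with hF'def
  set Fm : ℝ → Matrix (Fin d) (Fin d) ℝ := fun t => Sg t - (Sg t)ᵀ with hFmdef
  have hFm : ∀ t i j, F t i j = Fm t i j := by
    intro t i j; simp [hFdef, hFmdef, Matrix.sub_apply]
  have hFd : ∀ t ∈ Set.Icc (0:ℝ) T, HasDerivAt F (F' t) t := by
    intro t ht
    rw [hasDerivAt_pi]; intro i
    rw [hasDerivAt_pi]; intro j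
    exact (hRic t ht i j).sub (hRic t ht j i)
  -- matrix identity
  have hFid : ∀ t, Ric t - (Ric t)ᵀ
      = Aᵀ * Fm t + Fm t * A - Fm t * (M1 * Sg t) - ((Sg t)ᵀ * M1) * Fm t := by
    intro t
    simp only [hRicDef, hFmdef, Matrix.transpose_add, Matrix.transpose_sub,
      Matrix.transpose_mul, Matrix.transpose_transpose, hM1, hC]
    noncomm_ring
  have hF'entry : ∀ t i j, F' t i j
      = (Aᵀ * Fm t + Fm t * A - Fm t * (M1 * Sg t) - ((Sg t)ᵀ * M1) * Fm t) i j := by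
    intro t i j
    rw [← hFid t]
    simp [hF'def, Matrix.sub_apply, Matrix.transpose_apply]
  -- coefficient bounds
  have hSgPiCont : ContinuousOn (fun t => (fun i j => (M1 * Sg t) i j : Fin d → Fin d → ℝ))
      (Set.Icc 0 T) := by
    apply continuousOn_pi.2; intro i; apply continuousOn_pi.2; intro j
    simp only [Matrix.mul_apply]
    exact continuousOn_finset_sum _ fun k _ => continuousOn_const.mul (hcont k j)
  have hSgPiCont2 : ContinuousOn (fun t => (fun i j => ((Sg t)ᵀ * M1) i j : Fin d → Fin d → ℝ))
      (Set.Icc 0 T) := by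
    apply continuousOn_pi.2; intro i; apply continuousOn_pi.2; intro j
    simp only [Matrix.mul_apply, Matrix.transpose_apply]
    exact continuousOn_finset_sum _ fun k _ => (hcont k i).mul continuousOn_const
  obtain ⟨B1, hB1⟩ := isCompact_Icc.exists_bound_of_continuousOn hSgPiCont
  obtain ⟨B2, hB2⟩ := isCompact_Icc.exists_bound_of_continuousOn hSgPiCont2
  set CA : ℝ := ‖(fun i j => A i j : Fin d → Fin d → ℝ)‖ with hCAdef
  have hCA0 : 0 ≤ CA := norm_nonneg _
  have hCAe : ∀ i j, |A i j| ≤ CA := fun i j => my_entry_le _ i j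
  set C1 : ℝ := max B1 0 with hC1def
  set C2 : ℝ := max B2 0 with hC2def
  have hC10 : 0 ≤ C1 := le_max_right _ _
  have hC20 : 0 ≤ C2 := le_max_right _ _
  have hC1e : ∀ t ∈ Set.Icc (0:ℝ) T, ∀ i j, |(M1 * Sg t) i j| ≤ C1 := by
    intro t ht i j
    exact le_trans (my_entry_le _ i j) (le_trans (hB1 t ht) (le_max_left _ _))
  have hC2e : ∀ t ∈ Set.Icc (0:ℝ) T, ∀ i j, |((Sg t)ᵀ * M1) i j| ≤ C2 := by
    intro t ht i j
    exact le_trans (my_entry_le _ i j) (le_trans (hB2 t ht) (le_max_left _ _))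
  set Kc : ℝ := d * CA + d * CA + d * C1 + d * C2 with hKcdef
  -- the entry bound on F'
  have hbound : ∀ t ∈ Set.Icc (0:ℝ) T, ‖F' t‖ ≤ Kc * ‖F t‖ := by
    intro t ht
    have hFe : ∀ i j, |Fm t i j| ≤ ‖F t‖ := by
      intro i j; rw [← hFm t i j]; exact my_entry_le _ i j
    have hF0 : (0:ℝ) ≤ ‖F t‖ := norm_nonneg _
    have key : ∀ i j, |F' t i j| ≤ Kc * ‖F t‖ := by
      intro i j
      rw [hF'entry t i j]
      have b1 : |(Aᵀ * Fm t) i j| ≤ d * (CA * ‖F t‖) :=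
        my_mul_entry_bound _ _ _ _ (fun a b => by simpa using hCAe b a) hFe hCA0 i j
      have b2 : |(Fm t * A) i j| ≤ d * (‖F t‖ * CA) :=
        my_mul_entry_bound _ _ _ _ hFe hCAe hF0 i j
      have b3 : |(Fm t * (M1 * Sg t)) i j| ≤ d * (‖F t‖ * C1) :=
        my_mul_entry_bound _ _ _ _ hFe (hC1e t ht) hF0 i j
      have b4 : |(((Sg t)ᵀ * M1) * Fm t) i j| ≤ d * (C2 * ‖F t‖) :=
        my_mul_entry_bound _ _ _ _ (hC2e t ht) hFe hC20 i j
      have habs : |(Aᵀ * Fm t + Fm t * A - Fm t * (M1 * Sg t) - ((Sg t)ᵀ * M1) * Fm t) i j|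
          ≤ |(Aᵀ * Fm t) i j| + |(Fm t * A) i j| + |(Fm t * (M1 * Sg t)) i j|
            + |(((Sg t)ᵀ * M1) * Fm t) i j| := by
        simp only [Matrix.sub_apply, Matrix.add_apply]
        have t1 : ∀ a b : ℝ, |a - b| ≤ |a| + |b| := fun a b => by
          rw [sub_eq_add_neg]
          exact (abs_add_le _ _).trans (by rw [abs_neg])
        have g1 := abs_sub ((Aᵀ * Fm t) i j + (Fm t * A) i j - (Fm t * (M1 * Sg t)) i j)
          ((((Sg t)ᵀ * M1) * Fm t) i j)
        have g2 := abs_sub ((Aᵀ * Fm t) i j + (Fm t * A) i j) ((Fm t * (M1 * Sg t)) i j)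
        have g3 := abs_add_le ((Aᵀ * Fm t) i j) ((Fm t * A) i j)
        linarith
      have expand : Kc * ‖F t‖ = d * (CA * ‖F t‖) + d * (‖F t‖ * CA)
          + d * (‖F t‖ * C1) + d * (C2 * ‖F t‖) := by rw [hKcdef]; ring
      linarith
    have hKc0 : 0 ≤ Kc := by positivity
    rw [pi_norm_le_iff_of_nonneg (mul_nonneg hKc0 hF0)]
    intro i
    rw [pi_norm_le_iff_of_nonneg (mul_nonneg hKc0 hF0)]
    intro j
    rw [Real.norm_eq_abs]
    exact key i j
  -- gronwall
  have hcontF : ContinuousOn F (Set.Icc 0 T) :=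
    continuousOn_pi.2 fun i => continuousOn_pi.2 fun j => (hcont i j).sub (hcont j i)
  have hF00 : F 0 = 0 := by
    funext i j
    have h := congrFun (congrFun hsym0 i) j
    simp only [Matrix.transpose_apply] at h
    simp [hFdef, h]
  have hgron := norm_le_gronwallBound_of_norm_deriv_right_le (δ := 0) (K := Kc) (ε := 0)
    (a := 0) (b := T) hcontF
    (fun s hs => (hFd s ⟨hs.1, hs.2.le⟩).hasDerivWithinAt)
    (by rw [hF00, norm_zero])
    (fun s hs => by rw [add_zero]; exact hbound s ⟨hs.1, hs.2.le⟩)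
  intro t ht
  have hFt : F t = 0 := by
    have h0' : ‖F t‖ ≤ 0 := by simpa [gronwallBound_ε0_δ0] using hgron t ht
    exact norm_le_zero_iff.mp h0'
  ext i j
  rw [Matrix.transpose_apply]
  have h := congrFun (congrFun hFt j) i
  simp only [hFdef, Pi.zero_apply] at h
  linarith

variable {d : ℕ}

lemma my_quad_bound (N : Matrix (Fin d) (Fin d) ℝ) (z : Fin d → ℝ) (ε : ℝ) (hε : 0 ≤ ε)
    (hN : ∀ i j, |N i j| ≤ ε) (hz : ∀ i, |z i| ≤ 1) :
    |z ⬝ᵥ N.mulVec z| ≤ d * d * ε := by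
  have hmv : ∀ i, |(N.mulVec z) i| ≤ d * ε := by
    intro i
    rw [Matrix.mulVec, dotProduct]
    calc |∑ j, N i j * z j| ≤ ∑ j, |N i j * z j| := Finset.abs_sum_le_sum_abs _ _
    _ ≤ ∑ _j : Fin d, ε := Finset.sum_le_sum fun j _ => by
        rw [abs_mul]
        calc |N i j| * |z j| ≤ ε * 1 :=
          mul_le_mul (hN i j) (hz j) (abs_nonneg _) hε
        _ = ε := mul_one ε
    _ = d * ε := by simp [Finset.card_univ]
  rw [dotProduct]
  calc |∑ i, z i * (N.mulVec z) i| ≤ ∑ i, |z i * (N.mulVec z) i| :=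
      Finset.abs_sum_le_sum_abs _ _
  _ ≤ ∑ _i : Fin d, d * ε := Finset.sum_le_sum fun i _ => by
      rw [abs_mul]
      calc |z i| * |(N.mulVec z) i| ≤ 1 * (d * ε) :=
        mul_le_mul (hz i) (hmv i) (abs_nonneg _) zero_le_one
      _ = d * ε := one_mul _
  _ = d * d * ε := by simp [Finset.card_univ]; ring

lemma my_posdef_open (hd : 0 < d) (Q : Matrix (Fin d) (Fin d) ℝ) (hQ : Q.PosDef) :
    ∃ ε > 0, ∀ M : Matrix (Fin d) (Fin d) ℝ, M.IsHermitian →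
      (∀ i j, |M i j - Q i j| ≤ ε) → M.PosDef := by
  haveI : Nonempty (Fin d) := ⟨⟨0, hd⟩⟩
  have hcomp : IsCompact (Metric.sphere (0 : Fin d → ℝ) 1) := isCompact_sphere _ _
  have hne : (Metric.sphere (0 : Fin d → ℝ) 1).Nonempty := by
    refine ⟨fun _ => 1, ?_⟩
    rw [mem_sphere_zero_iff_norm]
    simp
  have hfc : Continuous (fun y : Fin d → ℝ => y ⬝ᵥ Q.mulVec y) := by
    simp only [dotProduct, Matrix.mulVec]
    exact continuous_finset_sum _ fun i _ => (continuous_apply i).mul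
      (continuous_finset_sum _ fun j _ => continuous_const.mul (continuous_apply j))
  obtain ⟨y0, hy0mem, hy0min⟩ := hcomp.exists_isMinOn hne hfc.continuousOn
  set c := y0 ⬝ᵥ Q.mulVec y0 with hc
  have hy0ne : y0 ≠ 0 := by
    intro h
    rw [mem_sphere_zero_iff_norm, h, norm_zero] at hy0mem
    exact one_ne_zero hy0mem.symm
  have hcpos : 0 < c := by
    have := (posDef_iff_dotProduct_mulVec.mp hQ).2 hy0ne
    simpa using this
  refine ⟨c / (2 * d * d + 1), by positivity, fun M hM hclose => ?_⟩
  refine posDef_iff_dotProduct_mulVec.mpr ⟨hM, fun y hy => ?_⟩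
  have hny : ‖y‖ ≠ 0 := norm_ne_zero_iff.mpr hy
  set z : Fin d → ℝ := ‖y‖⁻¹ • y with hzdef
  have hz1 : ‖z‖ = 1 := by
    rw [hzdef, norm_smul]
    simp [abs_of_nonneg (inv_nonneg.mpr (norm_nonneg y)), inv_mul_cancel₀ hny]
  have hzmem : z ∈ Metric.sphere (0 : Fin d → ℝ) 1 := by
    rwa [mem_sphere_zero_iff_norm]
  have hzq : c ≤ z ⬝ᵥ Q.mulVec z := hy0min hzmem
  have hzentry : ∀ i, |z i| ≤ 1 := by
    intro i
    have := norm_le_pi_norm z i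
    rw [hz1] at this
    simpa [Real.norm_eq_abs] using this
  have hNbd := my_quad_bound (M - Q) z (c / (2 * d * d + 1)) (by positivity)
    (fun i j => by simpa [Matrix.sub_apply] using hclose i j) hzentry
  have hsplit : z ⬝ᵥ M.mulVec z = z ⬝ᵥ Q.mulVec z + z ⬝ᵥ (M - Q).mulVec z := by
    rw [Matrix.sub_mulVec, dotProduct_sub]
    ring
  have hdpos : (0:ℝ) < d := Nat.cast_pos.mpr hd
  have hzMpos : 0 < z ⬝ᵥ M.mulVec z := by
    rw [hsplit]
    have hb : (d:ℝ) * d * (c / (2 * d * d + 1)) < c := by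
      rw [div_eq_mul_inv]
      rw [show (d:ℝ) * d * (c * (2 * (d:ℝ) * d + 1)⁻¹) = c * (((d:ℝ) * d) * (2 * (d:ℝ) * d + 1)⁻¹) by push_cast; ring]
      have h1 : ((d:ℝ) * d) * (2 * (d:ℝ) * d + 1)⁻¹ < 1 := by
        rw [mul_inv_lt_iff₀ (by positivity)]
        nlinarith
      nlinarith
    have := abs_le.mp hNbd
    linarith
  -- scale back
  have hy_eq : y = ‖y‖ • z := by
    rw [hzdef, smul_smul, mul_inv_cancel₀ hny, one_smul]
  have : y ⬝ᵥ M.mulVec y = ‖y‖ * (‖y‖ * (z ⬝ᵥ M.mulVec z)) := by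
    calc y ⬝ᵥ M.mulVec y = (‖y‖ • z) ⬝ᵥ M.mulVec (‖y‖ • z) := by rw [← hy_eq]
    _ = ‖y‖ * (‖y‖ * (z ⬝ᵥ M.mulVec z)) := by
        rw [Matrix.mulVec_smul, smul_dotProduct, dotProduct_smul]
        simp [smul_eq_mul]
  have hstar : star y = y := by simp
  rw [hstar, this]
  have h0 : 0 < ‖y‖ := lt_of_le_of_ne (norm_nonneg _) (Ne.symm hny)
  positivity

lemma my_posdef_propagate (hd : 0 < d) {T : ℝ} (hT : 0 < T)
    (Sg : ℝ → Matrix (Fin d) (Fin d) ℝ)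
    (hcont : ∀ i j, ContinuousOn (fun t => Sg t i j) (Set.Icc 0 T))
    (hsym : ∀ t ∈ Set.Icc (0:ℝ) T, (Sg t)ᵀ = Sg t)
    (hinv : ∀ t ∈ Set.Icc (0:ℝ) T, IsUnit (Sg t).det)
    (h0 : (Sg 0).PosDef) : ∀ t ∈ Set.Icc (0:ℝ) T, (Sg t).PosDef := by
  have hHerm : ∀ t ∈ Set.Icc (0:ℝ) T, (Sg t).IsHermitian := by
    intro t ht
    rw [Matrix.IsHermitian, Matrix.conjTranspose_eq_transpose_of_trivial]
    exact hsym t ht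
  by_contra hcon
  push_neg at hcon
  obtain ⟨t1, ht1, hnot1⟩ := hcon
  set B : Set ℝ := {t | t ∈ Set.Icc (0:ℝ) T ∧ ¬ (Sg t).PosDef} with hBdef
  have hBne : B.Nonempty := ⟨t1, ht1, hnot1⟩
  have hBbdd : BddBelow B := ⟨0, fun b hb => hb.1.1⟩
  set τ := sInf B with hτdef
  have hτ0 : 0 ≤ τ := le_csInf hBne fun b hb => hb.1.1
  have hτT : τ ≤ T := le_trans (csInf_le hBbdd ⟨ht1, hnot1⟩) ht1.2
  have hτIcc : τ ∈ Set.Icc (0:ℝ) T := ⟨hτ0, hτT⟩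
  have hbefore : ∀ s, 0 ≤ s → s < τ → (Sg s).PosDef := by
    intro s hs0 hsτ
    by_contra hno
    exact absurd (csInf_le hBbdd ⟨⟨hs0, le_trans hsτ.le hτT⟩, hno⟩) (not_le.mpr hsτ)
  -- Sg τ is positive semidefinite
  have hPSD : (Sg τ).PosSemidef := by
    rcases eq_or_lt_of_le hτ0 with heq | hlt
    · rw [← heq]; exact h0.posSemidef
    refine posSemidef_iff_dotProduct_mulVec.mpr ⟨hHerm τ hτIcc, fun y => ?_⟩
    have hstar : star y = y := by simp
    rw [hstar]
    rcases eq_or_ne y 0 with rfl | hy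
    · simp
    have hgc : ContinuousOn (fun s => y ⬝ᵥ (Sg s).mulVec y) (Set.Icc 0 T) := by
      simp only [dotProduct, Matrix.mulVec]
      exact continuousOn_finset_sum _ fun i _ => continuousOn_const.mul
        (continuousOn_finset_sum _ fun j _ => (hcont i j).mul continuousOn_const)
    have hsub : Set.Ico (0:ℝ) τ ⊆ Set.Icc 0 T := fun s hs => ⟨hs.1, le_trans hs.2.le hτT⟩
    have hmem : τ ∈ closure (Set.Ico (0:ℝ) τ) := by
      rw [closure_Ico (ne_of_lt hlt)]
      exact ⟨hτ0, le_refl _⟩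
    have hNB : (nhdsWithin τ (Set.Ico (0:ℝ) τ)).NeBot :=
      mem_closure_iff_nhdsWithin_neBot.mp hmem
    have htend : Filter.Tendsto (fun s => y ⬝ᵥ (Sg s).mulVec y)
        (nhdsWithin τ (Set.Ico (0:ℝ) τ)) (nhds (y ⬝ᵥ (Sg τ).mulVec y)) :=
      ((hgc τ hτIcc).mono hsub).tendsto
    refine ge_of_tendsto htend ?_
    apply eventually_nhdsWithin_of_forall
    intro s hs
    have := (posDef_iff_dotProduct_mulVec.mp (hbefore s hs.1 hs.2)).2 hy
    simpa using this.le
  -- Sg τ is positive definite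
  have hPD : (Sg τ).PosDef := by
    refine posDef_iff_dotProduct_mulVec.mpr ⟨hPSD.1, fun y hy => ?_⟩
    rcases lt_or_eq_of_le ((posSemidef_iff_dotProduct_mulVec.mp hPSD).2 y) with h | h
    · exact h
    exfalso
    have hz : (Sg τ).mulVec y = 0 := (hPSD.dotProduct_mulVec_zero_iff y).mp h.symm
    have : y = 0 := by
      have h1 : ((Sg τ)⁻¹ * Sg τ).mulVec y = (Sg τ)⁻¹.mulVec ((Sg τ).mulVec y) :=
        (Matrix.mulVec_mulVec _ _ _).symm
      rw [Matrix.nonsing_inv_mul _ (hinv τ hτIcc), hz, Matrix.mulVec_zero,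
        Matrix.one_mulVec] at h1
      exact h1
    exact hy this
  -- openness contradiction
  obtain ⟨ε, hε, hopen⟩ := my_posdef_open hd _ hPD
  have hev : ∀ᶠ s in nhdsWithin τ (Set.Icc 0 T), ∀ i j, |Sg s i j - Sg τ i j| ≤ ε := by
    rw [Filter.eventually_all]
    intro i
    rw [Filter.eventually_all]
    intro j
    have htd : Filter.Tendsto (fun s => Sg s i j) (nhdsWithin τ (Set.Icc 0 T))
        (nhds (Sg τ i j)) := (hcont i j τ hτIcc).tendsto
    have hball : ∀ᶠ s in nhdsWithin τ (Set.Icc 0 T), Sg s i j ∈ Metric.closedBall (Sg τ i j) ε :=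
      htd (Metric.closedBall_mem_nhds (Sg τ i j) hε)
    exact hball.mono fun s hs => by
      simpa [Metric.mem_closedBall, Real.dist_eq] using hs
  have hevmem : ∀ᶠ s in nhdsWithin τ (Set.Icc 0 T), s ∈ Set.Icc (0:ℝ) T :=
    eventually_mem_nhdsWithin
  have hevPD : ∀ᶠ s in nhdsWithin τ (Set.Icc 0 T), (Sg s).PosDef := by
    filter_upwards [hev, hevmem] with s h1 h2
    exact hopen _ (hHerm s h2) h1
  have hclosB : τ ∈ closure B := csInf_mem_closure hBne hBbdd
  have hNBB : (nhdsWithin τ B).NeBot := mem_closure_iff_nhdsWithin_neBot.mp hclosB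
  have hBsub : B ⊆ Set.Icc (0:ℝ) T := fun b hb => hb.1
  have hevPD' : ∀ᶠ s in nhdsWithin τ B, (Sg s).PosDef :=
    hevPD.filter_mono (nhdsWithin_mono τ hBsub)
  have hevNot : ∀ᶠ s in nhdsWithin τ B, ¬ (Sg s).PosDef :=
    eventually_nhdsWithin_of_forall fun s hs => hs.2
  obtain ⟨s, hs1, hs2⟩ := (hevPD'.and hevNot).exists
  exact hs2 hs1

end Helpers

/-- the minimum energy cost of any admissible pair `(v, x)` of the minimum
energy dual optimal control problem is bounded below by
`∫₀ᵀ (ζ_t − Hᵀ x̂_t)ᵀ R⁻¹ (ζ_t − Hᵀ x̂_t) dt`, where `x̂` solves the Kalman filter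
equation driven by `Sg`, the solution of the differential Riccati equation. -/
theorem minimum_energy_lower_bound
    (d m n : ℕ) (hd : 0 < d) (hm : 0 < m) (hn : 0 < n) (T : ℝ) (hT : 0 < T)
    (A : Matrix (Fin d) (Fin d) ℝ) (H : Matrix (Fin d) (Fin m) ℝ)
    (σ : Matrix (Fin d) (Fin n) ℝ) (m0 : Fin d → ℝ)
    (Sigma0 : Matrix (Fin d) (Fin d) ℝ) (R : Matrix (Fin m) (Fin m) ℝ)
    (hSigma0 : Sigma0.PosDef) (hR : R.PosDef)
    (Sg : ℝ → Matrix (Fin d) (Fin d) ℝ) (hSg0 : Sg 0 = Sigma0)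
    (hSgC1 : ∀ i j, ContDiffOn ℝ 1 (fun t => Sg t i j) (Set.Icc 0 T))
    (hRic : ∀ t ∈ Set.Icc (0:ℝ) T, ∀ i j,
      HasDerivAt (fun s => Sg s i j)
        ((Aᵀ * Sg t + Sg t * A + σ * σᵀ - Sg t * H * R⁻¹ * Hᵀ * Sg t) i j) t)
    (hSgInv : ∀ t ∈ Set.Icc (0:ℝ) T, IsUnit (Sg t).det)
    (ζ : ℝ → Fin m → ℝ) (hζ : ContinuousOn ζ (Set.Icc 0 T))
    (xhat : ℝ → Fin d → ℝ) (hxhatC1 : ContDiffOn ℝ 1 xhat (Set.Icc 0 T))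
    (hxhat0 : xhat 0 = m0)
    (hxhat : ∀ t ∈ Set.Icc (0:ℝ) T,
      HasDerivAt xhat
        (Aᵀ.mulVec (xhat t) + (Sg t * H * R⁻¹).mulVec (ζ t - Hᵀ.mulVec (xhat t))) t)
    (x0 : Fin d → ℝ) (v : ℝ → Fin n → ℝ) (hv : ContinuousOn v (Set.Icc 0 T))
    (x : ℝ → Fin d → ℝ) (hxC1 : ContDiffOn ℝ 1 x (Set.Icc 0 T)) (hx0 : x 0 = x0)
    (hx : ∀ t ∈ Set.Icc (0:ℝ) T,
      HasDerivAt x (Aᵀ.mulVec (x t) + σ.mulVec (v t)) t) :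
    (∫ t in (0:ℝ)..T,
        (ζ t - Hᵀ.mulVec (xhat t)) ⬝ᵥ R⁻¹.mulVec (ζ t - Hᵀ.mulVec (xhat t))) ≤
      (x0 - m0) ⬝ᵥ Sigma0⁻¹.mulVec (x0 - m0) +
        ∫ t in (0:ℝ)..T,
          ((v t) ⬝ᵥ (v t) +
            (ζ t - Hᵀ.mulVec (x t)) ⬝ᵥ R⁻¹.mulVec (ζ t - Hᵀ.mulVec (x t))) := by
  -- basic symmetry facts
  have hRT : Rᵀ = R := by
    rw [← Matrix.conjTranspose_eq_transpose_of_trivial]; exact hR.1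
  have hKT : (R⁻¹)ᵀ = R⁻¹ := by rw [Matrix.transpose_nonsing_inv, hRT]
  have hS0T : Sigma0ᵀ = Sigma0 := by
    rw [← Matrix.conjTranspose_eq_transpose_of_trivial]; exact hSigma0.1
  have hdet : ∀ t ∈ Set.Icc (0:ℝ) T, (Sg t).det ≠ 0 :=
    fun t ht => (hSgInv t ht).ne_zero
  have hSgCont : ∀ i j, ContinuousOn (fun t => Sg t i j) (Set.Icc 0 T) :=
    fun i j => (hSgC1 i j).continuousOn
  -- symmetry of Sg
  have hM1T : (H * R⁻¹ * Hᵀ)ᵀ = H * R⁻¹ * Hᵀ := by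
    rw [Matrix.transpose_mul, Matrix.transpose_mul, Matrix.transpose_transpose, hKT,
      Matrix.mul_assoc]
  have hCT : (σ * σᵀ)ᵀ = σ * σᵀ := by
    rw [Matrix.transpose_mul, Matrix.transpose_transpose]
  have hRic' : ∀ t ∈ Set.Icc (0:ℝ) T, ∀ i j,
      HasDerivAt (fun s => Sg s i j)
        ((Aᵀ * Sg t + Sg t * A + σ * σᵀ - Sg t * (H * R⁻¹ * Hᵀ) * Sg t) i j) t := by
    intro t ht i j
    have heq : Sg t * (H * R⁻¹ * Hᵀ) * Sg t = Sg t * H * R⁻¹ * Hᵀ * Sg t := by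
      simp only [Matrix.mul_assoc]
    rw [heq]
    exact hRic t ht i j
  have hsym : ∀ t ∈ Set.Icc (0:ℝ) T, (Sg t)ᵀ = Sg t :=
    my_riccati_symm hT A (H * R⁻¹ * Hᵀ) (σ * σᵀ) hM1T hCT Sg
      (by rw [hSg0]; exact hS0T) hRic' hSgCont
  -- positive definiteness of Sg
  have hPD : ∀ t ∈ Set.Icc (0:ℝ) T, (Sg t).PosDef :=
    my_posdef_propagate hd hT Sg hSgCont hsym hSgInv (by rw [hSg0]; exact hSigma0)
  -- definitions
  set e : ℝ → Fin d → ℝ := fun s => x s - xhat s with he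
  set P : ℝ → Matrix (Fin d) (Fin d) ℝ := fun s => (Sg s)⁻¹ with hP
  set w : ℝ → Fin m → ℝ := fun s => ζ s - Hᵀ.mulVec (xhat s) with hw
  set V : ℝ → ℝ := fun s => e s ⬝ᵥ (P s).mulVec (e s) with hV
  -- entrywise continuity
  have hxe : ∀ i, ContinuousOn (fun t => x t i) (Set.Icc 0 T) :=
    fun i => (continuous_apply i).comp_continuousOn hxC1.continuousOn
  have hxhate : ∀ i, ContinuousOn (fun t => xhat t i) (Set.Icc 0 T) :=
    fun i => (continuous_apply i).comp_continuousOn hxhatC1.continuousOn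
  have hve : ∀ i, ContinuousOn (fun t => v t i) (Set.Icc 0 T) :=
    fun i => (continuous_apply i).comp_continuousOn hv
  have hζe : ∀ i, ContinuousOn (fun t => ζ t i) (Set.Icc 0 T) :=
    fun i => (continuous_apply i).comp_continuousOn hζ
  have hee : ∀ i, ContinuousOn (fun t => e t i) (Set.Icc 0 T) := by
    intro i
    simp only [he, Pi.sub_apply]
    exact (hxe i).sub (hxhate i)
  have hPe : ∀ i j, ContinuousOn (fun t => P t i j) (Set.Icc 0 T) :=
    fun i j => my_inv_entry_contOn hSgCont hdet i j
  have hwe : ∀ i, ContinuousOn (fun t => w t i) (Set.Icc 0 T) := by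
    intro i
    simp only [hw, Pi.sub_apply, Matrix.mulVec, dotProduct]
    exact (hζe i).sub (continuousOn_finset_sum _ fun j _ =>
      continuousOn_const.mul (hxhate j))
  have hVcont : ContinuousOn V (Set.Icc 0 T) := by
    simp only [hV, dotProduct, Matrix.mulVec]
    exact continuousOn_finset_sum _ fun i _ => (hee i).mul
      (continuousOn_finset_sum _ fun j _ => (hPe i j).mul (hee j))
  -- the three integrands
  set ff : ℝ → ℝ := fun t => (v t) ⬝ᵥ (v t)
      + (ζ t - Hᵀ.mulVec (x t)) ⬝ᵥ R⁻¹.mulVec (ζ t - Hᵀ.mulVec (x t)) with hff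
  set gg : ℝ → ℝ := fun t => w t ⬝ᵥ R⁻¹.mulVec (w t) with hgg
  set rr : ℝ → ℝ := fun t =>
      (v t - (σᵀ * P t).mulVec (e t)) ⬝ᵥ (v t - (σᵀ * P t).mulVec (e t)) with hrr
  have hue : ∀ i, ContinuousOn (fun t => (ζ t - Hᵀ.mulVec (x t)) i) (Set.Icc 0 T) := by
    intro i
    simp only [Pi.sub_apply, Matrix.mulVec, dotProduct]
    exact (hζe i).sub (continuousOn_finset_sum _ fun j _ =>
      continuousOn_const.mul (hxe j))
  have hffc : ContinuousOn ff (Set.Icc 0 T) := by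
    simp only [hff, dotProduct, Matrix.mulVec]
    exact ContinuousOn.add
      (continuousOn_finset_sum _ fun i _ => (hve i).mul (hve i))
      (continuousOn_finset_sum _ fun i _ => (hue i).mul
        (continuousOn_finset_sum _ fun j _ => continuousOn_const.mul (hue j)))
  have hggc : ContinuousOn gg (Set.Icc 0 T) := by
    simp only [hgg, dotProduct, Matrix.mulVec]
    exact continuousOn_finset_sum _ fun i _ => (hwe i).mul
      (continuousOn_finset_sum _ fun j _ => continuousOn_const.mul (hwe j))
  have hrre : ∀ i, ContinuousOn (fun t => (v t - (σᵀ * P t).mulVec (e t)) i)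
      (Set.Icc 0 T) := by
    intro i
    simp only [Pi.sub_apply, Matrix.mulVec, dotProduct, Matrix.mul_apply]
    refine (hve i).sub (continuousOn_finset_sum _ fun j _ => ContinuousOn.mul ?_ (hee j))
    exact continuousOn_finset_sum _ fun k _ => continuousOn_const.mul (hPe k j)
  have hrrc : ContinuousOn rr (Set.Icc 0 T) := by
    simp only [hrr, dotProduct]
    exact continuousOn_finset_sum _ fun i _ => (hrre i).mul (hrre i)
  -- derivative of V on the interior
  have hVd : ∀ t ∈ Set.Ioo (0:ℝ) T, HasDerivAt V (ff t - gg t - rr t) t := by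
    intro t ht
    have htIcc : t ∈ Set.Icc (0:ℝ) T := ⟨ht.1.le, ht.2.le⟩
    set Ric : Matrix (Fin d) (Fin d) ℝ :=
      Aᵀ * Sg t + Sg t * A + σ * σᵀ - Sg t * H * R⁻¹ * Hᵀ * Sg t with hRicD
    have hSgD : ∀ i j, HasDerivAt (fun s => Sg s i j) (Ric i j) t := hRic t htIcc
    have hPd : ∀ i j, HasDerivAt (fun s => P s i j) ((-(P t * Ric * P t)) i j) t :=
      my_hasDerivAt_inv hSgD (hdet t htIcc)
    set e' : Fin d → ℝ :=
      Aᵀ.mulVec (e t) + σ.mulVec (v t) - (Sg t * H * R⁻¹).mulVec (w t) with he'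
    have hed : ∀ i, HasDerivAt (fun s => e s i) (e' i) t := by
      intro i
      have h1 := hasDerivAt_pi.1 (hx t htIcc) i
      have h2 := hasDerivAt_pi.1 (hxhat t htIcc) i
      have h3 := h1.sub h2
      have heq : (Aᵀ.mulVec (x t) + σ.mulVec (v t)) i
          - (Aᵀ.mulVec (xhat t) + (Sg t * H * R⁻¹).mulVec (ζ t - Hᵀ.mulVec (xhat t))) i
          = e' i := by
        simp only [he', he, hw, Pi.add_apply, Pi.sub_apply, Matrix.mulVec_sub]
        ring
      rw [heq] at h3
      exact h3
    have hquad := my_hasDerivAt_quad (u := e) (w := e) (P := P) hed hed hPd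
    have halg := my_key_algebra A H σ R⁻¹ (Sg t) (P t) hKT (hsym t htIcc)
      (Matrix.nonsing_inv_mul _ (hSgInv t htIcc))
      (Matrix.mul_nonsing_inv _ (hSgInv t htIcc))
      (by rw [hP]; rw [Matrix.transpose_nonsing_inv, hsym t htIcc])
      (e t) (v t) (w t)
    -- rewrite the derivative value
    have hplug : ζ t - Hᵀ.mulVec (x t) = w t - Hᵀ.mulVec (e t) := by
      simp only [hw, he, Matrix.mulVec_sub]
      abel
    have hval : e' ⬝ᵥ (P t).mulVec (e t) + e t ⬝ᵥ (-(P t * Ric * P t)).mulVec (e t)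
        + e t ⬝ᵥ (P t).mulVec e' = ff t - gg t - rr t := by
      rw [← hplug] at halg
      rw [he', hRicD]
      exact halg
    rw [← hval]
    exact hquad
  -- fundamental theorem of calculus
  have huIcc : Set.uIcc (0:ℝ) T = Set.Icc 0 T := Set.uIcc_of_le hT.le
  have hffint : IntervalIntegrable ff MeasureTheory.volume 0 T := by
    apply ContinuousOn.intervalIntegrable; rwa [huIcc]
  have hggint : IntervalIntegrable gg MeasureTheory.volume 0 T := by
    apply ContinuousOn.intervalIntegrable; rwa [huIcc]
  have hrrint : IntervalIntegrable rr MeasureTheory.volume 0 T := by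
    apply ContinuousOn.intervalIntegrable; rwa [huIcc]
  have hDint : IntervalIntegrable (fun t => ff t - gg t - rr t)
      MeasureTheory.volume 0 T := (hffint.sub hggint).sub hrrint
  have hftc : ∫ t in (0:ℝ)..T, (ff t - gg t - rr t) = V T - V 0 :=
    intervalIntegral.integral_eq_sub_of_hasDeriv_right_of_le hT.le hVcont
      (fun t ht => (hVd t ht).hasDerivWithinAt) hDint
  have hsplit : ∫ t in (0:ℝ)..T, (ff t - gg t - rr t)
      = (∫ t in (0:ℝ)..T, ff t) - (∫ t in (0:ℝ)..T, gg t) - ∫ t in (0:ℝ)..T, rr t := by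
    rw [intervalIntegral.integral_sub (hffint.sub hggint) hrrint,
      intervalIntegral.integral_sub hffint hggint]
  -- nonnegativity facts
  have hrrnn : 0 ≤ ∫ t in (0:ℝ)..T, rr t := by
    apply intervalIntegral.integral_nonneg hT.le
    intro u _
    simp only [hrr, dotProduct]
    exact Finset.sum_nonneg fun i _ => mul_self_nonneg _
  have hVT : 0 ≤ V T := by
    have hpd := (hPD T ⟨hT.le, le_refl T⟩).inv
    have := (posSemidef_iff_dotProduct_mulVec.mp hpd.posSemidef).2 (e T)
    simpa [hV, hP] using this
  have hV0 : V 0 = (x0 - m0) ⬝ᵥ Sigma0⁻¹.mulVec (x0 - m0) := by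
    simp only [hV, he, hP, hSg0, hx0, hxhat0]
  -- conclude
  have hgoal1 : (∫ t in (0:ℝ)..T, gg t)
      = (∫ t in (0:ℝ)..T, ff t) - (∫ t in (0:ℝ)..T, rr t) - V T + V 0 := by
    rw [hsplit] at hftc
    linarith
  calc (∫ t in (0:ℝ)..T, gg t)
      ≤ (∫ t in (0:ℝ)..T, ff t) + V 0 := by rw [hgoal1]; linarith
  _ = (x0 - m0) ⬝ᵥ Sigma0⁻¹.mulVec (x0 - m0) + ∫ t in (0:ℝ)..T, ff t := by
      rw [hV0]; ring
end

section
/- Suppose Σ : [0,T] → ℝ^{d×d} is continuously differentiable, satisfies the differential Riccati equation dΣ_t/dt = Aᵀ Σ_t + Σ_t A + σσᵀ − Σ_t H R⁻¹ Hᵀ Σ_t for all t ∈ [0,T] with initial condition Σ_0, and Σ_t is invertible for every t ∈ [0,T]. Let ζ : [0,T] → ℝ^m be continuous and let x̂ : [0,T] → ℝ^d solve dx̂_t/dt = Aᵀ x̂_t + Σ_t H R⁻¹ (ζ_t − Hᵀ x̂_t) with x̂_0 = m_0. Let x† : [0,T] → ℝ^d be a continuously differentiable solution of the backward equation dx_t/dt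 = Aᵀ x_t + σσᵀ Σ_t⁻¹ (x_t − x̂_t) with terminal condition x_T = x̂_T, and set v_t := σᵀ Σ_t⁻¹ (x†_t − x̂_t) and x_0 := x†_0. Then the minimum energy cost achieves its lower bound: (x_0 − m_0)ᵀ Σ_0⁻¹ (x_0 − m_0) + ∫₀^T (|v_t|² + (ζ_t − Hᵀ x†_t)ᵀ R⁻¹ (ζ_t − Hᵀ x†_t)) dt = ∫₀^T (ζ_t − Hᵀ x̂_t)ᵀ R⁻¹ (ζ_t − Hᵀ x̂_t) dt. -/
open Matrix intervalIntegral

section Aux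

attribute [local instance] Matrix.linftyOpNormedAddCommGroup Matrix.linftyOpNormedSpace
  Matrix.linftyOpNormedRing Matrix.linftyOpNormedAlgebra

variable {d : ℕ}

/-- entrywise derivatives give a derivative of a matrix-valued function -/
lemma hasDerivAt_of_entries {f : ℝ → Matrix (Fin d) (Fin d) ℝ} {f' : Matrix (Fin d) (Fin d) ℝ}
    {t : ℝ} (h : ∀ i j, HasDerivAt (fun s => f s i j) (f' i j) t) :
    HasDerivAt f f' t := by
  have : HasDerivAt (fun s => ∑ i : Fin d, ∑ j : Fin d, f s i j • Matrix.single i j (1:ℝ))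
      (∑ i : Fin d, ∑ j : Fin d, f' i j • Matrix.single i j (1:ℝ)) t := by
    apply HasDerivAt.fun_sum
    intro i _
    apply HasDerivAt.fun_sum
    intro j _
    exact (h i j).smul_const _
  convert this using 1
  · funext s
    simpa [Matrix.smul_single, smul_eq_mul] using matrix_eq_sum_single (f s)
  · simpa [Matrix.smul_single, smul_eq_mul] using matrix_eq_sum_single f'

/-- a derivative of a matrix-valued function gives entrywise derivatives -/
lemma entry_hasDerivAt {f : ℝ → Matrix (Fin d) (Fin d) ℝ} {f' : Matrix (Fin d) (Fin d) ℝ}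
    {t : ℝ} (h : HasDerivAt f f' t) (i j : Fin d) :
    HasDerivAt (fun s => f s i j) (f' i j) t := by
  let l : Matrix (Fin d) (Fin d) ℝ →ₗ[ℝ] ℝ :=
    { toFun := fun M => M i j, map_add' := fun _ _ => rfl, map_smul' := fun _ _ => rfl }
  exact (l.toContinuousLinearMap.hasFDerivAt).comp_hasDerivAt t h

/-- derivative of the matrix inverse along a path of invertible matrices -/
lemma hasDerivAt_inv_matrix {f : ℝ → Matrix (Fin d) (Fin d) ℝ} {f' : Matrix (Fin d) (Fin d) ℝ}
    {t : ℝ} (h : HasDerivAt f f' t) (hu : IsUnit (f t).det) :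
    HasDerivAt (fun s => (f s)⁻¹) (-((f t)⁻¹ * f' * (f t)⁻¹)) t := by
  have hu' : IsUnit (f t) := (Matrix.isUnit_iff_isUnit_det _).mpr hu
  obtain ⟨u, hu⟩ := hu'
  have H1 : HasFDerivAt Ring.inverse
      (-(ContinuousLinearMap.mulLeftRight ℝ _ (↑u⁻¹) (↑u⁻¹))) (f t) :=
    hu ▸ hasFDerivAt_ringInverse u
  have H2 := H1.comp_hasDerivAt t h
  have huinv : (↑u⁻¹ : Matrix (Fin d) (Fin d) ℝ) = (f t)⁻¹ := by
    rw [Matrix.nonsing_inv_eq_ringInverse, ← hu, Ring.inverse_unit]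
  simp only [ContinuousLinearMap.neg_apply, ContinuousLinearMap.mulLeftRight_apply, huinv] at H2
  have heq : Ring.inverse ∘ f = fun s => (f s)⁻¹ :=
    funext fun s => (Matrix.nonsing_inv_eq_ringInverse _).symm
  rwa [heq] at H2

/-- a symmetric Riccati-type equation with symmetric initial condition preserves symmetry -/
lemma sg_transpose_eq (T : ℝ) (A M C : Matrix (Fin d) (Fin d) ℝ)
    (hM : Mᵀ = M) (hC : Cᵀ = C) (Sg : ℝ → Matrix (Fin d) (Fin d) ℝ)
    (h0 : (Sg 0)ᵀ = Sg 0)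
    (hderiv : ∀ t ∈ Set.Icc (0:ℝ) T, HasDerivAt Sg
      (Aᵀ * Sg t + Sg t * A + C - Sg t * M * Sg t) t) :
    ∀ t ∈ Set.Icc (0:ℝ) T, (Sg t)ᵀ = Sg t := by
  have htderiv : ∀ t ∈ Set.Icc (0:ℝ) T, HasDerivAt (fun s => (Sg s)ᵀ)
      (Aᵀ * (Sg t)ᵀ + (Sg t)ᵀ * A + C - (Sg t)ᵀ * M * (Sg t)ᵀ) t := by
    intro t ht
    have h1 : HasDerivAt (fun s => (Sg s)ᵀ)
        ((Aᵀ * Sg t + Sg t * A + C - Sg t * M * Sg t)ᵀ) t := by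
      apply hasDerivAt_of_entries
      intro i j
      exact entry_hasDerivAt (hderiv t ht) j i
    convert h1 using 1
    simp only [Matrix.transpose_add, Matrix.transpose_sub, Matrix.transpose_mul,
      Matrix.transpose_transpose, hM, hC]
    noncomm_ring
  have hcont : ContinuousOn Sg (Set.Icc 0 T) :=
    fun t ht => (hderiv t ht).continuousAt.continuousWithinAt
  have htcont : ContinuousOn (fun s => (Sg s)ᵀ) (Set.Icc 0 T) :=
    fun t ht => (htderiv t ht).continuousAt.continuousWithinAt
  obtain ⟨ρ1, hρ1⟩ := (isCompact_Icc (a := (0:ℝ)) (b := T)).exists_bound_of_continuousOn hcont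
  obtain ⟨ρ2, hρ2⟩ := (isCompact_Icc (a := (0:ℝ)) (b := T)).exists_bound_of_continuousOn htcont
  set ρ : ℝ := max (max ρ1 ρ2) 0 with hρdef
  have hρ0 : 0 ≤ ρ := le_max_right _ _
  have hbf : ∀ t ∈ Set.Icc (0:ℝ) T, ‖Sg t‖ ≤ ρ :=
    fun t ht => (hρ1 t ht).trans ((le_max_left _ _).trans (le_max_left _ _))
  have hbg : ∀ t ∈ Set.Icc (0:ℝ) T, ‖(Sg t)ᵀ‖ ≤ ρ :=
    fun t ht => (hρ2 t ht).trans ((le_max_right _ _).trans (le_max_left _ _))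
  set v : ℝ → Matrix (Fin d) (Fin d) ℝ → Matrix (Fin d) (Fin d) ℝ :=
    fun _ X => Aᵀ * X + X * A + C - X * M * X with hvdef
  set Kr : ℝ := ‖Aᵀ‖ + ‖A‖ + ρ * ‖M‖ + ‖M‖ * ρ with hKdef
  have hKr0 : 0 ≤ Kr := by positivity
  have hv : ∀ t : ℝ, LipschitzOnWith Kr.toNNReal (v t)
      (Metric.closedBall (0 : Matrix (Fin d) (Fin d) ℝ) ρ) := by
    intro t
    apply LipschitzOnWith.of_dist_le_mul
    intro X hX Y hY
    rw [Metric.mem_closedBall, dist_zero_right] at hX hY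
    rw [dist_eq_norm, dist_eq_norm, Real.coe_toNNReal _ hKr0]
    have hsplit : v t X - v t Y
        = Aᵀ * (X - Y) + (X - Y) * A - ((X - Y) * M * X + Y * M * (X - Y)) := by
      simp only [hvdef]; noncomm_ring
    rw [hsplit]
    have h1 : ‖Aᵀ * (X - Y) + (X - Y) * A - ((X - Y) * M * X + Y * M * (X - Y))‖
        ≤ ‖Aᵀ * (X - Y)‖ + ‖(X - Y) * A‖ + (‖(X - Y) * M * X‖ + ‖Y * M * (X - Y)‖) :=
      (norm_sub_le _ _).trans (by gcongr <;> [exact norm_add_le _ _; exact norm_add_le _ _])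
    refine h1.trans ?_
    have e1 : ‖Aᵀ * (X - Y)‖ ≤ ‖Aᵀ‖ * ‖X - Y‖ := norm_mul_le _ _
    have e2 : ‖(X - Y) * A‖ ≤ ‖X - Y‖ * ‖A‖ := norm_mul_le _ _
    have e3 : ‖(X - Y) * M * X‖ ≤ ‖X - Y‖ * ‖M‖ * ‖X‖ :=
      (norm_mul_le _ _).trans (by gcongr; exact norm_mul_le _ _)
    have e4 : ‖Y * M * (X - Y)‖ ≤ ‖Y‖ * ‖M‖ * ‖X - Y‖ :=
      (norm_mul_le _ _).trans (by gcongr; exact norm_mul_le _ _)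
    have hXρ : ‖X‖ ≤ ρ := hX
    have hYρ : ‖Y‖ ≤ ρ := hY
    have hn : 0 ≤ ‖X - Y‖ := norm_nonneg _
    have hMn : 0 ≤ ‖M‖ := norm_nonneg _
    have f3 : ‖X - Y‖ * ‖M‖ * ‖X‖ ≤ ‖X - Y‖ * ‖M‖ * ρ :=
      mul_le_mul_of_nonneg_left hXρ (mul_nonneg hn hMn)
    have f4 : ‖Y‖ * ‖M‖ * ‖X - Y‖ ≤ ρ * ‖M‖ * ‖X - Y‖ :=
      mul_le_mul_of_nonneg_right (mul_le_mul_of_nonneg_right hYρ hMn) hn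
    simp only [hKdef]
    nlinarith [norm_nonneg (X - Y)]
  have := ODE_solution_unique_of_mem_Icc_right (v := v)
    (s := fun _ => Metric.closedBall (0 : Matrix (Fin d) (Fin d) ℝ) ρ) (fun t _ => hv t)
    htcont
    (fun t ht => (htderiv t (Set.Ico_subset_Icc_self ht)).hasDerivWithinAt)
    (fun t ht => by
      simpa [Metric.mem_closedBall, dist_zero_right] using hbg t (Set.Ico_subset_Icc_self ht))
    hcont
    (fun t ht => (hderiv t (Set.Ico_subset_Icc_self ht)).hasDerivWithinAt)
    (fun t ht => by
      simpa [Metric.mem_closedBall, dist_zero_right] using hbf t (Set.Ico_subset_Icc_self ht))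
    h0
  exact fun t ht => this ht

lemma dot_shift {k l : ℕ} (M : Matrix (Fin k) (Fin l) ℝ) (x : Fin k → ℝ) (y : Fin l → ℝ) :
    x ⬝ᵥ (M *ᵥ y) = (Mᵀ *ᵥ x) ⬝ᵥ y := by
  rw [Matrix.dotProduct_mulVec, ← Matrix.mulVec_transpose]

/-- the completion-of-squares algebraic identity -/
lemma key_alg {d m n : ℕ} (A S P : Matrix (Fin d) (Fin d) ℝ) (H : Matrix (Fin d) (Fin m) ℝ)
    (σ : Matrix (Fin d) (Fin n) ℝ) (R' : Matrix (Fin m) (Fin m) ℝ)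
    (hSP : S * P = 1) (hS : Sᵀ = S) (hP : Pᵀ = P) (hR' : R'ᵀ = R')
    (e : Fin d → ℝ) (w : Fin m → ℝ) :
    (Aᵀ *ᵥ e + (σ * σᵀ) *ᵥ (P *ᵥ e) - (S * H * R') *ᵥ w) ⬝ᵥ (P *ᵥ e)
      + e ⬝ᵥ ((-(P * (Aᵀ * S + S * A + σ * σᵀ - S * (H * R' * Hᵀ) * S) * P)) *ᵥ e)
      + e ⬝ᵥ (P *ᵥ (Aᵀ *ᵥ e + (σ * σᵀ) *ᵥ (P *ᵥ e) - (S * H * R') *ᵥ w))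
    = (σᵀ *ᵥ (P *ᵥ e)) ⬝ᵥ (σᵀ *ᵥ (P *ᵥ e))
      + ((w - Hᵀ *ᵥ e) ⬝ᵥ (R' *ᵥ (w - Hᵀ *ᵥ e)) - w ⬝ᵥ (R' *ᵥ w)) := by
  set u := P *ᵥ e with hu
  have hSu : S *ᵥ u = e := by rw [hu, Matrix.mulVec_mulVec, hSP, Matrix.one_mulVec]
  set α : ℝ := (Aᵀ *ᵥ e) ⬝ᵥ u with hα
  set β : ℝ := (σᵀ *ᵥ u) ⬝ᵥ (σᵀ *ᵥ u) with hβ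
  set γ : ℝ := w ⬝ᵥ (R' *ᵥ (Hᵀ *ᵥ e)) with hγ
  set δ : ℝ := (Hᵀ *ᵥ e) ⬝ᵥ (R' *ᵥ (Hᵀ *ᵥ e)) with hδ
  have t1b : ((σ * σᵀ) *ᵥ u) ⬝ᵥ u = β := by
    rw [← Matrix.mulVec_mulVec, dotProduct_comm, dot_shift, hβ]
  have t1c : ((S * H * R') *ᵥ w) ⬝ᵥ u = γ := by
    rw [dotProduct_comm, dot_shift, Matrix.transpose_mul, Matrix.transpose_mul, hS, hR',
      ← Matrix.mulVec_mulVec, ← Matrix.mulVec_mulVec, hSu, dotProduct_comm, hγ]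
  have hPe : ∀ z : Fin d → ℝ, e ⬝ᵥ (P *ᵥ z) = u ⬝ᵥ z := by
    intro z; rw [dot_shift, hP, ← hu]
  have t3a : e ⬝ᵥ (P *ᵥ (Aᵀ *ᵥ e)) = α := by
    rw [hPe, dotProduct_comm, hα]
  have t3b : e ⬝ᵥ (P *ᵥ ((σ * σᵀ) *ᵥ u)) = β := by
    rw [hPe, ← Matrix.mulVec_mulVec, dot_shift, hβ]
  have t3c : e ⬝ᵥ (P *ᵥ ((S * H * R') *ᵥ w)) = γ := by
    rw [hPe, dot_shift, Matrix.transpose_mul, Matrix.transpose_mul, hS, hR',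
      ← Matrix.mulVec_mulVec, ← Matrix.mulVec_mulVec, hSu, dotProduct_comm, hγ]
  have t2a : e ⬝ᵥ ((P * (Aᵀ * S) * P) *ᵥ e) = α := by
    simp only [← Matrix.mulVec_mulVec]
    rw [← hu, hPe, hSu, dotProduct_comm, hα]
  have t2b : e ⬝ᵥ ((P * (S * A) * P) *ᵥ e) = α := by
    simp only [← Matrix.mulVec_mulVec]
    rw [← hu, hPe, dot_shift, hS, hSu, dot_shift, hα]
  have t2c : e ⬝ᵥ ((P * (σ * σᵀ) * P) *ᵥ e) = β := by
    simp only [← Matrix.mulVec_mulVec]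
    rw [← hu, hPe, dot_shift, hβ]
  have t2d : e ⬝ᵥ ((P * (S * (H * R' * Hᵀ) * S) * P) *ᵥ e) = δ := by
    simp only [← Matrix.mulVec_mulVec]
    rw [← hu, hPe, hSu, dot_shift, hS, hSu, dot_shift]
  have r1 : (Hᵀ *ᵥ e) ⬝ᵥ (R' *ᵥ w) = γ := by
    rw [dot_shift, hR', dotProduct_comm]
  have expand2 : -(P * (Aᵀ * S + S * A + σ * σᵀ - S * (H * R' * Hᵀ) * S) * P)
      = -(P * (Aᵀ * S) * P + P * (S * A) * P + P * (σ * σᵀ) * P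
          - P * (S * (H * R' * Hᵀ) * S) * P) := by noncomm_ring
  rw [expand2, Matrix.neg_mulVec, dotProduct_neg,
    Matrix.sub_mulVec, Matrix.add_mulVec, Matrix.add_mulVec,
    dotProduct_sub, dotProduct_add, dotProduct_add, t2a, t2b, t2c, t2d,
    sub_dotProduct, add_dotProduct, t1b, t1c,
    Matrix.mulVec_sub, Matrix.mulVec_add, dotProduct_sub, dotProduct_add, t3a, t3b, t3c,
    Matrix.mulVec_sub, dotProduct_sub, sub_dotProduct, sub_dotProduct, r1]
  rw [← hγ, ← hδ]
  ring

/-- derivative of a time-dependent quadratic form -/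
lemma hasDerivAt_quadform {d : ℕ} {e : ℝ → Fin d → ℝ} {P : ℝ → Matrix (Fin d) (Fin d) ℝ}
    {e' : Fin d → ℝ} {P' : Matrix (Fin d) (Fin d) ℝ} {t : ℝ}
    (he : HasDerivAt e e' t) (hP : ∀ i j, HasDerivAt (fun s => P s i j) (P' i j) t) :
    HasDerivAt (fun s => e s ⬝ᵥ (P s *ᵥ e s))
      (e' ⬝ᵥ (P t *ᵥ e t) + e t ⬝ᵥ (P' *ᵥ e t) + e t ⬝ᵥ (P t *ᵥ e')) t := by
  have hei : ∀ i, HasDerivAt (fun s => e s i) (e' i) t := fun i => hasDerivAt_pi.mp he i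
  have main : HasDerivAt (fun s => ∑ i, e s i * ∑ j, P s i j * e s j)
      (∑ i, (e' i * ∑ j, P t i j * e t j
        + e t i * ∑ j, (P' i j * e t j + P t i j * e' j))) t := by
    apply HasDerivAt.fun_sum
    intro i _
    exact (hei i).mul (HasDerivAt.fun_sum fun j _ => ((hP i j).mul (hei j)))
  refine main.congr_deriv ?_
  simp only [dotProduct, Matrix.mulVec, Finset.mul_sum, mul_add, Finset.sum_add_distrib]
  ring_nf

lemma continuousOn_dot {k : ℕ} {f g : ℝ → Fin k → ℝ} {s : Set ℝ}
    (hf : ∀ i, ContinuousOn (fun t => f t i) s) (hg : ∀ i, ContinuousOn (fun t => g t i) s) :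
    ContinuousOn (fun t => f t ⬝ᵥ g t) s := by
  simp only [dotProduct]
  exact continuousOn_finset_sum _ fun i _ => (hf i).mul (hg i)

lemma continuousOn_mulVec {k l : ℕ} {M : ℝ → Matrix (Fin k) (Fin l) ℝ} {f : ℝ → Fin l → ℝ}
    {s : Set ℝ} (hM : ∀ i j, ContinuousOn (fun t => M t i j) s)
    (hf : ∀ j, ContinuousOn (fun t => f t j) s) (i : Fin k) :
    ContinuousOn (fun t => (M t *ᵥ f t) i) s := by
  simp only [Matrix.mulVec, dotProduct]
  exact continuousOn_finset_sum _ fun j _ => (hM i j).mul (hf j)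

end Aux

section Aux2

attribute [local instance] Matrix.linftyOpNormedAddCommGroup Matrix.linftyOpNormedSpace
  Matrix.linftyOpNormedRing Matrix.linftyOpNormedAlgebra

/-- the minimum energy cost achieves its lower bound along the
Rauch-Tung-Striebel optimal trajectory `x†` solving the backward equation
`dx_t/dt = Aᵀ x_t + σσᵀ Sg_t⁻¹ (x_t − x̂_t)` with `x_T = x̂_T`, with control
`v_t = σᵀ Sg_t⁻¹ (x†_t − x̂_t)` and initial condition `x_0 = x†_0`. -/
theorem minimum_energy_optimality
    (d m n : ℕ) (hd : 0 < d) (hm : 0 < m) (hn : 0 < n) (T : ℝ) (hT : 0 < T)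
    (A : Matrix (Fin d) (Fin d) ℝ) (H : Matrix (Fin d) (Fin m) ℝ)
    (σ : Matrix (Fin d) (Fin n) ℝ) (m0 : Fin d → ℝ)
    (Sigma0 : Matrix (Fin d) (Fin d) ℝ) (R : Matrix (Fin m) (Fin m) ℝ)
    (hSigma0 : Sigma0.PosDef) (hR : R.PosDef)
    (Sg : ℝ → Matrix (Fin d) (Fin d) ℝ) (hSg0 : Sg 0 = Sigma0)
    (hSgC1 : ∀ i j, ContDiffOn ℝ 1 (fun t => Sg t i j) (Set.Icc 0 T))
    (hRic : ∀ t ∈ Set.Icc (0:ℝ) T, ∀ i j,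
      HasDerivAt (fun s => Sg s i j)
        ((Aᵀ * Sg t + Sg t * A + σ * σᵀ - Sg t * H * R⁻¹ * Hᵀ * Sg t) i j) t)
    (hSgInv : ∀ t ∈ Set.Icc (0:ℝ) T, IsUnit (Sg t).det)
    (ζ : ℝ → Fin m → ℝ) (hζ : ContinuousOn ζ (Set.Icc 0 T))
    (xhat : ℝ → Fin d → ℝ) (hxhatC1 : ContDiffOn ℝ 1 xhat (Set.Icc 0 T))
    (hxhat0 : xhat 0 = m0)
    (hxhat : ∀ t ∈ Set.Icc (0:ℝ) T,
      HasDerivAt xhat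
        (Aᵀ.mulVec (xhat t) + (Sg t * H * R⁻¹).mulVec (ζ t - Hᵀ.mulVec (xhat t))) t)
    (xdag : ℝ → Fin d → ℝ) (hxdagC1 : ContDiffOn ℝ 1 xdag (Set.Icc 0 T))
    (hxdag : ∀ t ∈ Set.Icc (0:ℝ) T,
      HasDerivAt xdag
        (Aᵀ.mulVec (xdag t) +
          (σ * σᵀ).mulVec ((Sg t)⁻¹.mulVec (xdag t - xhat t))) t)
    (hxdagT : xdag T = xhat T)
    (v : ℝ → Fin n → ℝ)
    (hv : v = fun t => σᵀ.mulVec ((Sg t)⁻¹.mulVec (xdag t - xhat t)))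
    (x0 : Fin d → ℝ) (hx0 : x0 = xdag 0) :
    (x0 - m0) ⬝ᵥ Sigma0⁻¹.mulVec (x0 - m0) +
        (∫ t in (0:ℝ)..T,
          ((v t) ⬝ᵥ (v t) +
            (ζ t - Hᵀ.mulVec (xdag t)) ⬝ᵥ R⁻¹.mulVec (ζ t - Hᵀ.mulVec (xdag t)))) =
      ∫ t in (0:ℝ)..T,
        (ζ t - Hᵀ.mulVec (xhat t)) ⬝ᵥ R⁻¹.mulVec (ζ t - Hᵀ.mulVec (xhat t)) := by
  subst hv hx0
  beta_reduce
  -- basic symmetry facts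
  have hRsym : Rᵀ = R := by
    have h := hR.1.eq
    rwa [Matrix.conjTranspose_eq_transpose_of_trivial] at h
  have hR'sym : (R⁻¹)ᵀ = R⁻¹ := by rw [Matrix.transpose_nonsing_inv, hRsym]
  -- the Riccati derivative at the matrix level
  set S' : ℝ → Matrix (Fin d) (Fin d) ℝ :=
    fun t => Aᵀ * Sg t + Sg t * A + σ * σᵀ - Sg t * (H * R⁻¹ * Hᵀ) * Sg t with hS'def
  have hSg' : ∀ t ∈ Set.Icc (0:ℝ) T, HasDerivAt Sg (S' t) t := by
    intro t ht
    have h1 : HasDerivAt Sg (Aᵀ * Sg t + Sg t * A + σ * σᵀ - Sg t * H * R⁻¹ * Hᵀ * Sg t) t :=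
      hasDerivAt_of_entries (fun i j => hRic t ht i j)
    convert h1 using 1
    simp only [hS'def, Matrix.mul_assoc]
  -- symmetry of Sg
  have hMsym : (H * R⁻¹ * Hᵀ)ᵀ = H * R⁻¹ * Hᵀ := by
    simp [Matrix.transpose_mul, hR'sym, Matrix.mul_assoc]
  have hCsym : (σ * σᵀ)ᵀ = σ * σᵀ := by simp [Matrix.transpose_mul]
  have h0sym : (Sg 0)ᵀ = Sg 0 := by
    rw [hSg0]
    have h := hSigma0.1.eq
    rwa [Matrix.conjTranspose_eq_transpose_of_trivial] at h
  have hSsym : ∀ t ∈ Set.Icc (0:ℝ) T, (Sg t)ᵀ = Sg t :=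
    sg_transpose_eq T A (H * R⁻¹ * Hᵀ) (σ * σᵀ) hMsym hCsym Sg h0sym hSg'
  have hPsym : ∀ t ∈ Set.Icc (0:ℝ) T, ((Sg t)⁻¹)ᵀ = (Sg t)⁻¹ := fun t ht => by
    rw [Matrix.transpose_nonsing_inv, hSsym t ht]
  have hSP : ∀ t ∈ Set.Icc (0:ℝ) T, Sg t * (Sg t)⁻¹ = 1 := fun t ht =>
    Matrix.mul_nonsing_inv _ (hSgInv t ht)
  -- derivative of the inverse
  have hPder : ∀ t ∈ Set.Icc (0:ℝ) T,
      HasDerivAt (fun s => (Sg s)⁻¹) (-((Sg t)⁻¹ * S' t * (Sg t)⁻¹)) t := fun t ht =>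
    hasDerivAt_inv_matrix (hSg' t ht) (hSgInv t ht)
  -- derivative of the error
  have heder : ∀ t ∈ Set.Icc (0:ℝ) T, HasDerivAt (fun s => xdag s - xhat s)
      (Aᵀ *ᵥ (xdag t - xhat t) + (σ * σᵀ) *ᵥ ((Sg t)⁻¹ *ᵥ (xdag t - xhat t))
        - (Sg t * H * R⁻¹) *ᵥ (ζ t - Hᵀ *ᵥ xhat t)) t := by
    intro t ht
    have h1 := (hxdag t ht).fun_sub (hxhat t ht)
    refine h1.congr_deriv ?_
    rw [Matrix.mulVec_sub Aᵀ]
    abel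
  -- the Lyapunov function and its derivative
  have hFder : ∀ t ∈ Set.Icc (0:ℝ) T,
      HasDerivAt (fun s => (xdag s - xhat s) ⬝ᵥ ((Sg s)⁻¹ *ᵥ (xdag s - xhat s)))
        (((σᵀ *ᵥ ((Sg t)⁻¹ *ᵥ (xdag t - xhat t))) ⬝ᵥ (σᵀ *ᵥ ((Sg t)⁻¹ *ᵥ (xdag t - xhat t)))
          + (ζ t - Hᵀ *ᵥ xdag t) ⬝ᵥ (R⁻¹ *ᵥ (ζ t - Hᵀ *ᵥ xdag t)))
          - (ζ t - Hᵀ *ᵥ xhat t) ⬝ᵥ (R⁻¹ *ᵥ (ζ t - Hᵀ *ᵥ xhat t))) t := by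
    intro t ht
    have hq := hasDerivAt_quadform (heder t ht)
      (fun i j => entry_hasDerivAt (hPder t ht) i j)
    beta_reduce at hq
    convert hq using 1
    have halg := key_alg A (Sg t) ((Sg t)⁻¹) H σ (R⁻¹) (hSP t ht) (hSsym t ht) (hPsym t ht)
      hR'sym (xdag t - xhat t) (ζ t - Hᵀ *ᵥ xhat t)
    rw [hS'def]
    rw [halg]
    have hw : ζ t - Hᵀ *ᵥ xhat t - Hᵀ *ᵥ (xdag t - xhat t) = ζ t - Hᵀ *ᵥ xdag t := by
      rw [Matrix.mulVec_sub]; abel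
    rw [hw]
    ring
  -- continuity of all the integrands
  have hecomp : ∀ i, ContinuousOn (fun t => (xdag t - xhat t) i) (Set.Icc 0 T) :=
    fun i t ht => ((hasDerivAt_pi.mp (heder t ht) i).continuousAt).continuousWithinAt
  have hPcont : ∀ i j, ContinuousOn (fun t => (Sg t)⁻¹ i j) (Set.Icc 0 T) :=
    fun i j t ht => ((entry_hasDerivAt (hPder t ht) i j).continuousAt).continuousWithinAt
  have hζcomp : ∀ i, ContinuousOn (fun t => ζ t i) (Set.Icc 0 T) :=
    fun i => (continuous_apply i).comp_continuousOn hζ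
  have hxdagcomp : ∀ i, ContinuousOn (fun t => xdag t i) (Set.Icc 0 T) :=
    fun i => (continuous_apply i).comp_continuousOn hxdagC1.continuousOn
  have hxhatcomp : ∀ i, ContinuousOn (fun t => xhat t i) (Set.Icc 0 T) :=
    fun i => (continuous_apply i).comp_continuousOn hxhatC1.continuousOn
  have hvcomp : ∀ i, ContinuousOn
      (fun t => (σᵀ *ᵥ ((Sg t)⁻¹ *ᵥ (xdag t - xhat t))) i) (Set.Icc 0 T) :=
    fun i => continuousOn_mulVec (M := fun _ => σᵀ) (fun _ _ => continuousOn_const)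
      (fun j => continuousOn_mulVec hPcont hecomp j) i
  have hwdagcomp : ∀ i, ContinuousOn (fun t => (ζ t - Hᵀ *ᵥ xdag t) i) (Set.Icc 0 T) :=
    fun i => (hζcomp i).sub
      (continuousOn_mulVec (M := fun _ => Hᵀ) (fun _ _ => continuousOn_const) hxdagcomp i)
  have hwhatcomp : ∀ i, ContinuousOn (fun t => (ζ t - Hᵀ *ᵥ xhat t) i) (Set.Icc 0 T) :=
    fun i => (hζcomp i).sub
      (continuousOn_mulVec (M := fun _ => Hᵀ) (fun _ _ => continuousOn_const) hxhatcomp i)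
  have hg1cont : ContinuousOn (fun t =>
      (σᵀ *ᵥ ((Sg t)⁻¹ *ᵥ (xdag t - xhat t))) ⬝ᵥ (σᵀ *ᵥ ((Sg t)⁻¹ *ᵥ (xdag t - xhat t)))
        + (ζ t - Hᵀ *ᵥ xdag t) ⬝ᵥ (R⁻¹ *ᵥ (ζ t - Hᵀ *ᵥ xdag t))) (Set.Icc 0 T) :=
    (continuousOn_dot hvcomp hvcomp).add (continuousOn_dot hwdagcomp
      (fun i => continuousOn_mulVec (M := fun _ => R⁻¹) (fun _ _ => continuousOn_const)
        hwdagcomp i))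
  have hg2cont : ContinuousOn (fun t =>
      (ζ t - Hᵀ *ᵥ xhat t) ⬝ᵥ (R⁻¹ *ᵥ (ζ t - Hᵀ *ᵥ xhat t))) (Set.Icc 0 T) :=
    continuousOn_dot hwhatcomp
      (fun i => continuousOn_mulVec (M := fun _ => R⁻¹) (fun _ _ => continuousOn_const)
        hwhatcomp i)
  have hg1int : IntervalIntegrable (fun t =>
      (σᵀ *ᵥ ((Sg t)⁻¹ *ᵥ (xdag t - xhat t))) ⬝ᵥ (σᵀ *ᵥ ((Sg t)⁻¹ *ᵥ (xdag t - xhat t)))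
        + (ζ t - Hᵀ *ᵥ xdag t) ⬝ᵥ (R⁻¹ *ᵥ (ζ t - Hᵀ *ᵥ xdag t)))
      MeasureTheory.volume 0 T := hg1cont.intervalIntegrable_of_Icc hT.le
  have hg2int : IntervalIntegrable (fun t =>
      (ζ t - Hᵀ *ᵥ xhat t) ⬝ᵥ (R⁻¹ *ᵥ (ζ t - Hᵀ *ᵥ xhat t)))
      MeasureTheory.volume 0 T := hg2cont.intervalIntegrable_of_Icc hT.le
  -- fundamental theorem of calculus
  have hIcc : Set.uIcc (0:ℝ) T = Set.Icc 0 T := Set.uIcc_of_le hT.le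
  have ftc := integral_eq_sub_of_hasDerivAt
    (f := fun s => (xdag s - xhat s) ⬝ᵥ ((Sg s)⁻¹ *ᵥ (xdag s - xhat s)))
    (f' := fun t =>
      ((σᵀ *ᵥ ((Sg t)⁻¹ *ᵥ (xdag t - xhat t))) ⬝ᵥ (σᵀ *ᵥ ((Sg t)⁻¹ *ᵥ (xdag t - xhat t)))
        + (ζ t - Hᵀ *ᵥ xdag t) ⬝ᵥ (R⁻¹ *ᵥ (ζ t - Hᵀ *ᵥ xdag t)))
        - (ζ t - Hᵀ *ᵥ xhat t) ⬝ᵥ (R⁻¹ *ᵥ (ζ t - Hᵀ *ᵥ xhat t)))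
    (fun t ht => hFder t (hIcc ▸ ht)) (hg1int.sub hg2int)
  rw [intervalIntegral.integral_sub hg1int hg2int] at ftc
  beta_reduce at ftc
  have hFT : (xdag T - xhat T) ⬝ᵥ ((Sg T)⁻¹ *ᵥ (xdag T - xhat T)) = 0 := by
    simp [hxdagT]
  have hF0 : (xdag 0 - xhat 0) ⬝ᵥ ((Sg 0)⁻¹ *ᵥ (xdag 0 - xhat 0))
      = (xdag 0 - m0) ⬝ᵥ (Sigma0⁻¹ *ᵥ (xdag 0 - m0)) := by
    rw [hxhat0, hSg0]
  rw [hFT, hF0] at ftc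
  linarith [ftc]
end Aux2
end

section
/- Let A ∈ ℝ^{d×d}, H ∈ ℝ^{d×m}, σ ∈ ℝ^{d×n}, T > 0, and let 𝒜 denote the generator of the linear Gaussian model, (𝒜g)(x) := (Aᵀx)ᵀ ∇g(x) + ½ tr(σσᵀ (D²g)(x)). Let u : [0,T] → ℝ^m be continuous and let ỹ : [0,T] → ℝ^d be continuously differentiable with −dỹ_t/dt = A ỹ_t + H u_t for all t ∈ [0,T]. Then the time-varying family of linear functions y_t(x) := ỹ_tᵀ x satisfies the backward partial differential equation −∂y_t(x)/∂t = (𝒜 y_t)(x) + xᵀ H u_t for all x ∈ ℝ^d and t ∈ [0,T]. Hence the finite-dimensional subspace of linear functions {x ↦ f̃ᵀx : f̃ ∈ ℝ^d} is invariant for the backward dual dynamics with deterministic control, on which the PDE reduces to the backward ODE −dỹ_t/dt = A ỹ_t + H u_t. -/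
open Matrix

lemma dotProduct_clm_eq (d : ℕ) (c : Fin d → ℝ) :
    (fun x : Fin d → ℝ => c ⬝ᵥ x)
      = ⇑(∑ i, c i • ContinuousLinearMap.proj (R := ℝ) (φ := fun _ : Fin d => ℝ) i) := by
  funext x
  simp [dotProduct]

lemma fderiv_dotProduct (d : ℕ) (c x : Fin d → ℝ) (j : Fin d) :
    fderiv ℝ (fun x : Fin d → ℝ => c ⬝ᵥ x) x (Pi.single j 1) = c j := by
  rw [dotProduct_clm_eq]
  rw [ContinuousLinearMap.fderiv]
  simp [Pi.single_apply, Finset.mul_sum]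

/-- if `ỹ` solves the backward ODE `−dỹ_t/dt = A ỹ_t + H u_t` on `[0,T]`,
then the time-varying family of linear functions `y_t(x) = ỹ_tᵀ x` satisfies the backward
PDE `−∂y_t(x)/∂t = (𝒜 y_t)(x) + xᵀ H u_t` where `𝒜` is the generator of the linear
Gaussian model: the subspace of linear functions is invariant for the backward dual
dynamics with deterministic control, on which the PDE reduces to the backward ODE. -/
theorem linear_functions_invariant_backward_dual_pde
    (d m n : ℕ) (hd : 0 < d) (hm : 0 < m) (hn : 0 < n) (T : ℝ) (hT : 0 < T)
    (A : Matrix (Fin d) (Fin d) ℝ) (H : Matrix (Fin d) (Fin m) ℝ)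
    (σ : Matrix (Fin d) (Fin n) ℝ)
    (grad : ((Fin d → ℝ) → ℝ) → (Fin d → ℝ) → (Fin d → ℝ))
    (hgrad : grad = fun g x i => fderiv ℝ g x (Pi.single i 1))
    (hess : ((Fin d → ℝ) → ℝ) → (Fin d → ℝ) → Matrix (Fin d) (Fin d) ℝ)
    (hhess : hess = fun g x => Matrix.of fun i j =>
      fderiv ℝ (fun y => fderiv ℝ g y (Pi.single j 1)) x (Pi.single i 1))
    (gen : ((Fin d → ℝ) → ℝ) → (Fin d → ℝ) → ℝ)
    (hgen : gen = fun g x =>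
      (Aᵀ.mulVec x) ⬝ᵥ grad g x + (1 / 2) * Matrix.trace (σ * σᵀ * hess g x))
    (u : ℝ → Fin m → ℝ) (hu : ContinuousOn u (Set.Icc 0 T))
    (ytilde : ℝ → Fin d → ℝ) (hytildeC1 : ContDiffOn ℝ 1 ytilde (Set.Icc 0 T))
    (hytilde : ∀ t ∈ Set.Icc (0:ℝ) T,
      HasDerivAt ytilde (-(A.mulVec (ytilde t) + H.mulVec (u t))) t)
    (y : ℝ → (Fin d → ℝ) → ℝ) (hy : y = fun t x => ytilde t ⬝ᵥ x) :
    ∀ (x : Fin d → ℝ), ∀ t ∈ Set.Icc (0:ℝ) T,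
      HasDerivAt (fun s => y s x) (-(gen (y t) x + x ⬝ᵥ H.mulVec (u t))) t := by
  intro x t ht
  -- compute gradient of y t
  have hgrad' : grad (y t) x = ytilde t := by
    funext j
    rw [hgrad, hy]
    exact fderiv_dotProduct d (ytilde t) x j
  have hhess' : hess (y t) x = 0 := by
    rw [hhess, hy]
    funext i j
    have : (fun z : Fin d → ℝ =>
        fderiv ℝ (fun x : Fin d → ℝ => ytilde t ⬝ᵥ x) z (Pi.single j 1))
        = fun _ => ytilde t j := by
      funext z; exact fderiv_dotProduct d (ytilde t) z j
    simp only [Matrix.of_apply, Matrix.zero_apply]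
    rw [this, fderiv_fun_const]
    simp
  have hgen' : gen (y t) x = x ⬝ᵥ A.mulVec (ytilde t) := by
    rw [hgen]
    simp only [hgrad', hhess', Matrix.mul_zero, Matrix.trace_zero, mul_zero, add_zero]
    rw [Matrix.mulVec_transpose, ← Matrix.dotProduct_mulVec]
  rw [hgen', hy]
  have h1 : HasDerivAt (fun s => ytilde s ⬝ᵥ x)
      ((-(A.mulVec (ytilde t) + H.mulVec (u t))) ⬝ᵥ x) t := by
    have hpi : ∀ i, HasDerivAt (fun s => ytilde s i)
        ((-(A.mulVec (ytilde t) + H.mulVec (u t))) i) t :=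
      fun i => hasDerivAt_pi.mp (hytilde t ht) i
    simp only [dotProduct]
    exact HasDerivAt.fun_sum fun i _ => (hpi i).mul_const (x i)
  convert h1 using 1
  simp [dotProduct, Matrix.mulVec, mul_add, add_mul, Finset.sum_add_distrib, mul_comm]
end
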